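/- arXiv:2004.09914 — 10 statements merged into one kernel-verified Lean document; each statement's English description precedes it below -/
import Mathlib

section
/- For every real parameter γ ∈ (0,1)∪(1,∞) there exists a unique x ∈ (0,1) satisfying x^{1-γ} + (1+x)^{1-γ} = 2 (all powers are real powers). -/
open Real Set

/-- For every real parameter `γ ∈ (0,1) ∪ (1,∞)` there exists a unique
`x ∈ (0,1)` satisfying `x^(1-γ) + (1+x)^(1-γ) = 2` (real powers). -/
theorem thaler_branch_point_exists_unique (γ : ℝ)
    (hγ : γ ∈ Set.Ioo (0 : ℝ) 1 ∪ Set.Ioi (1 : ℝ)) :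
    ∃! x : ℝ, x ∈ Set.Ioo (0 : ℝ) 1 ∧
      x ^ (1 - γ) + (1 + x) ^ (1 - γ) = 2 := by
  set s : ℝ := 1 - γ with hs
  set f : ℝ → ℝ := fun x => x ^ s + (1 + x) ^ s with hf
  rcases hγ with hγ | hγ
  · -- γ ∈ (0,1), so s ∈ (0,1), f strictly increasing
    have hs0 : 0 < s := by simp [hs]; linarith [hγ.2]
    have hmono : StrictMonoOn f (Icc (0:ℝ) 1) := by
      intro x hx y hy hxy
      have h1 : x ^ s < y ^ s := Real.rpow_lt_rpow hx.1 hxy hs0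
      have h2 : (1 + x) ^ s < (1 + y) ^ s :=
        Real.rpow_lt_rpow (by linarith [hx.1]) (by linarith) hs0
      simpa [hf] using add_lt_add h1 h2
    have hcont : ContinuousOn f (Icc (0:ℝ) 1) := by
      apply ContinuousOn.add
      · exact (continuousOn_id).rpow_const fun x _ => Or.inr hs0.le
      · exact (continuousOn_const.add continuousOn_id).rpow_const fun x _ => Or.inr hs0.le
    have hf0 : f 0 = 1 := by
      simp [hf, Real.zero_rpow hs0.ne', Real.one_rpow]
    have hf1 : 2 < f 1 := by
      have h2 : (1:ℝ) < (2:ℝ) ^ s :=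
        (Real.one_lt_rpow_iff_of_pos two_pos).2 (Or.inl ⟨one_lt_two, hs0⟩)
      have : (1:ℝ) + 1 = 2 := by norm_num
      simp only [hf, Real.one_rpow, this]
      linarith
    have h2mem : (2:ℝ) ∈ Ioo (f 0) (f 1) := by rw [hf0]; exact ⟨one_lt_two, hf1⟩
    obtain ⟨x, hxmem, hxval⟩ := intermediate_value_Ioo (by norm_num) hcont h2mem
    refine ⟨x, ⟨hxmem, hxval⟩, ?_⟩
    rintro y ⟨hymem, hyval⟩
    exact hmono.injOn (Ioo_subset_Icc_self hymem) (Ioo_subset_Icc_self hxmem)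
      (by rw [show f y = 2 from hyval, show f x = 2 from hxval])
  · -- γ > 1, so s < 0, f strictly decreasing
    have hs0 : s < 0 := by rw [hs]; linarith [mem_Ioi.mp hγ]
    have hanti : StrictAntiOn f (Ioo (0:ℝ) 1) := by
      intro x hx y hy hxy
      have h1 : y ^ s < x ^ s := Real.rpow_lt_rpow_of_neg hx.1 hxy hs0
      have h2 : (1 + y) ^ s < (1 + x) ^ s :=
        Real.rpow_lt_rpow_of_neg (by linarith [hx.1]) (by linarith) hs0
      simpa [hf] using add_lt_add h1 h2
    set a : ℝ := (2:ℝ) ^ (1/s) with ha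
    have ha0 : 0 < a := Real.rpow_pos_of_pos two_pos _
    have ha1 : a < 1 := Real.rpow_lt_one_of_one_lt_of_neg one_lt_two
      (div_neg_of_pos_of_neg one_pos hs0)
    have has : a ^ s = 2 := by
      rw [ha, ← Real.rpow_mul (by norm_num), one_div_mul_cancel hs0.ne, Real.rpow_one]
    have hcont : ContinuousOn f (Icc a 1) := by
      apply ContinuousOn.add
      · exact (continuousOn_id).rpow_const fun x hx =>
          Or.inl (ne_of_gt (lt_of_lt_of_le ha0 hx.1))
      · exact (continuousOn_const.add continuousOn_id).rpow_const fun x hx =>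
          Or.inl (by have := lt_of_lt_of_le ha0 hx.1; show (1:ℝ) + x ≠ 0; positivity)
    have hfa : 2 < f a := by
      have : (0:ℝ) < (1 + a) ^ s := Real.rpow_pos_of_pos (by linarith) _
      simp only [hf]; rw [has]; linarith
    have hf1 : f 1 < 2 := by
      have h2 : (2:ℝ) ^ s < 1 := Real.rpow_lt_one_of_one_lt_of_neg one_lt_two hs0
      have : (1:ℝ) + 1 = 2 := by norm_num
      simp only [hf, Real.one_rpow, this]
      linarith
    have h2mem : (2:ℝ) ∈ Ioo (f 1) (f a) := ⟨hf1, hfa⟩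
    obtain ⟨x, hxmem, hxval⟩ := intermediate_value_Ioo' ha1.le hcont h2mem
    have hxmem' : x ∈ Ioo (0:ℝ) 1 := ⟨lt_trans ha0 hxmem.1, hxmem.2⟩
    refine ⟨x, ⟨hxmem', hxval⟩, ?_⟩
    rintro y ⟨hymem, hyval⟩
    exact hanti.injOn hymem hxmem'
      (by rw [show f y = 2 from hyval, show f x = 2 from hxval])
end

section
/- The function g is strictly increasing on (0,1], satisfies g(x*) = 1 and g(1) = 2, and g(x) → 0 as x → 0+. Consequently g maps (0,x*] bijectively onto (0,1] and maps (x*,1] bijectively onto (1,2], so the Thaler map has two increasing full branches. -/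
open Real Set Filter Topology

noncomputable section

/-- The common branch formula of the Thaler map:
`g(x) = (x^(1-γ) + (1+x)^(1-γ) − 1)^(1/(1-γ))` (real powers). -/
def thalerG (γ x : ℝ) : ℝ := (x ^ (1 - γ) + (1 + x) ^ (1 - γ) - 1) ^ (1 / (1 - γ))

/-- `g` is strictly increasing on `(0,1]`, satisfies `g(x*) = 1`, `g(1) = 2`,
and `g(x) → 0` as `x → 0+`.  Consequently `g` maps `(0,x*]` bijectively onto `(0,1]` and
maps `(x*,1]` bijectively onto `(1,2]`, so the Thaler map has two increasing full branches. -/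
theorem thalerG_two_full_branches (γ : ℝ)
    (hγ : γ ∈ Set.Ioo (0 : ℝ) 1 ∪ Set.Ioi (1 : ℝ))
    (xs : ℝ) (hxs : xs ∈ Set.Ioo (0 : ℝ) 1)
    (hxseq : xs ^ (1 - γ) + (1 + xs) ^ (1 - γ) = 2) :
    StrictMonoOn (thalerG γ) (Set.Ioc (0 : ℝ) 1) ∧
    thalerG γ xs = 1 ∧
    thalerG γ 1 = 2 ∧
    Tendsto (thalerG γ) (nhdsWithin 0 (Set.Ioi (0 : ℝ))) (nhds 0) ∧
    Set.BijOn (thalerG γ) (Set.Ioc (0 : ℝ) xs) (Set.Ioc (0 : ℝ) 1) ∧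
    Set.BijOn (thalerG γ) (Set.Ioc xs 1) (Set.Ioc (1 : ℝ) 2) := by
  set p : ℝ := 1 - γ with hpdef
  have hpcase : 0 < p ∨ p < 0 := by
    rcases hγ with h | h
    · exact Or.inl (by simp only [hpdef]; linarith [h.2])
    · exact Or.inr (by simp only [hpdef]; simp only [Set.mem_Ioi] at h; linarith)
  have hp0 : p ≠ 0 := by rcases hpcase with h | h <;> [exact ne_of_gt h; exact ne_of_lt h]
  -- positivity of inner function on (0,1]
  have hpos : ∀ x ∈ Set.Ioc (0 : ℝ) 1, 0 < x ^ p + (1 + x) ^ p - 1 := by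
    intro x hx
    rcases hpcase with h | h
    · have h1 : 0 < x ^ p := Real.rpow_pos_of_pos hx.1 p
      have h2 : 1 < (1 + x) ^ p :=
        Real.one_lt_rpow_iff_of_pos (by linarith [hx.1]) |>.mpr (Or.inl ⟨by linarith [hx.1], h⟩)
      linarith
    · have h1 : 1 ≤ x ^ p :=
        Real.one_le_rpow_of_pos_of_le_one_of_nonpos hx.1 hx.2 (le_of_lt h)
      have h2 : 0 < (1 + x) ^ p := Real.rpow_pos_of_pos (by linarith [hx.1]) p
      linarith
  -- strict monotonicity
  have hmono : StrictMonoOn (thalerG γ) (Set.Ioc (0 : ℝ) 1) := by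
    intro x hx y hy hxy
    unfold thalerG
    rw [← hpdef]
    rcases hpcase with h | h
    · have h1 : x ^ p + (1 + x) ^ p - 1 < y ^ p + (1 + y) ^ p - 1 := by
        have ha : x ^ p < y ^ p := Real.rpow_lt_rpow (le_of_lt hx.1) hxy h
        have hb : (1 + x) ^ p < (1 + y) ^ p :=
          Real.rpow_lt_rpow (by linarith [hx.1]) (by linarith) h
        linarith
      exact Real.rpow_lt_rpow (le_of_lt (hpos x hx)) h1 (by positivity)
    · have h1 : y ^ p + (1 + y) ^ p - 1 < x ^ p + (1 + x) ^ p - 1 := by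
        have ha : y ^ p < x ^ p := Real.rpow_lt_rpow_of_neg hx.1 hxy h
        have hb : (1 + y) ^ p < (1 + x) ^ p :=
          Real.rpow_lt_rpow_of_neg (by linarith [hx.1]) (by linarith) h
        linarith
      exact Real.rpow_lt_rpow_of_neg (hpos y hy) h1 (by
        exact div_neg_of_pos_of_neg one_pos h)
  -- values
  have hg_xs : thalerG γ xs = 1 := by
    unfold thalerG
    rw [hxseq]
    norm_num
  have hg_1 : thalerG γ 1 = 2 := by
    unfold thalerG
    rw [Real.one_rpow, ← hpdef]
    have : (1 : ℝ) + (1 + 1) ^ p - 1 = (2 : ℝ) ^ p := by norm_num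
    rw [this, ← Real.rpow_mul (by norm_num : (0:ℝ) ≤ 2), mul_one_div_cancel hp0,
      Real.rpow_one]
  -- continuity on (0,1]
  have hcont : ∀ x ∈ Set.Ioc (0 : ℝ) 1, ContinuousAt (thalerG γ) x := by
    intro x hx
    have hinner : ContinuousAt (fun x : ℝ => x ^ p + (1 + x) ^ p - 1) x := by
      have c1 : ContinuousAt (fun x : ℝ => x ^ p) x :=
        Real.continuousAt_rpow_const x p (Or.inl (ne_of_gt hx.1))
      have c2 : ContinuousAt (fun x : ℝ => (1 + x) ^ p) x :=
        ContinuousAt.rpow_const (by fun_prop) (Or.inl (ne_of_gt (by linarith [hx.1])))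
      exact (c1.add c2).sub continuousAt_const
    have := ContinuousAt.rpow_const (p := 1 / p) hinner (Or.inl (ne_of_gt (hpos x hx)))
    unfold thalerG
    rw [← hpdef]
    exact this
  -- tendsto at 0+
  have htend : Tendsto (thalerG γ) (nhdsWithin 0 (Set.Ioi (0 : ℝ))) (nhds 0) := by
    have hG : thalerG γ = fun x => (x ^ p + (1 + x) ^ p - 1) ^ (1 / p) := by
      funext x; unfold thalerG; rw [← hpdef]
    rw [hG]
    have h2 : Tendsto (fun x : ℝ => (1 + x) ^ p - 1) (nhdsWithin 0 (Set.Ioi (0:ℝ))) (nhds 0) := by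
      have c2 : ContinuousAt (fun x : ℝ => (1 + x) ^ p - 1) 0 := by
        have := Real.continuousAt_rpow_const (1 + 0 : ℝ) p (Or.inl (by norm_num))
        exact ((this.comp (by fun_prop)).sub continuousAt_const)
      have := c2.tendsto.mono_left (nhdsWithin_le_nhds (s := Set.Ioi (0:ℝ)))
      simpa using this
    rcases hpcase with h | h
    · have h1 : Tendsto (fun x : ℝ => x ^ p) (nhdsWithin 0 (Set.Ioi (0:ℝ))) (nhds 0) := by
        have c1 : ContinuousAt (fun x : ℝ => x ^ p) 0 :=
          Real.continuousAt_rpow_const 0 p (Or.inr (le_of_lt h))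
        have := c1.tendsto.mono_left (nhdsWithin_le_nhds (s := Set.Ioi (0:ℝ)))
        simpa [Real.zero_rpow hp0] using this
      have hsum : Tendsto (fun x : ℝ => x ^ p + (1 + x) ^ p - 1)
          (nhdsWithin 0 (Set.Ioi (0:ℝ))) (nhds 0) := by
        have := h1.add h2
        simpa [add_sub_assoc] using this
      have houter : ContinuousAt (fun t : ℝ => t ^ (1 / p)) 0 :=
        Real.continuousAt_rpow_const 0 (1 / p) (Or.inr (by positivity))
      have hcomp := houter.tendsto.comp hsum
      have h0 : (0 : ℝ) ^ (1 / p) = 0 := Real.zero_rpow (one_div_ne_zero hp0)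
      rw [h0] at hcomp
      exact hcomp
    · have h1 : Tendsto (fun x : ℝ => x ^ p) (nhdsWithin 0 (Set.Ioi (0:ℝ))) atTop := by
        have := (tendsto_rpow_atTop (by linarith : (0:ℝ) < -p)).comp tendsto_inv_nhdsGT_zero
        apply this.congr'
        filter_upwards [self_mem_nhdsWithin] with x hx
        simp only [Set.mem_Ioi] at hx
        simp only [Function.comp_apply]
        rw [Real.inv_rpow (le_of_lt hx), Real.rpow_neg (le_of_lt hx), inv_inv]
      have hsum : Tendsto (fun x : ℝ => x ^ p + (1 + x) ^ p - 1)
          (nhdsWithin 0 (Set.Ioi (0:ℝ))) atTop := by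
        have := h1.atTop_add h2
        simpa [add_sub_assoc] using this
      have houter : Tendsto (fun t : ℝ => t ^ (1 / p)) atTop (nhds 0) := by
        have := tendsto_rpow_neg_atTop (y := -(1/p)) (by
          have : 1 / p < 0 := div_neg_of_pos_of_neg one_pos h
          linarith)
        simpa using this
      exact houter.comp hsum
  refine ⟨hmono, hg_xs, hg_1, htend, ?_, ?_⟩
  · -- BijOn (0, xs] → (0, 1]
    have hsub : Set.Ioc (0:ℝ) xs ⊆ Set.Ioc (0:ℝ) 1 := Set.Ioc_subset_Ioc_right (le_of_lt hxs.2)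
    have hxs1 : xs ∈ Set.Ioc (0:ℝ) 1 := ⟨hxs.1, le_of_lt hxs.2⟩
    refine ⟨?_, hmono.injOn.mono hsub, ?_⟩
    · intro x hx
      refine ⟨?_, ?_⟩
      · unfold thalerG; exact Real.rpow_pos_of_pos (hpos x (hsub hx)) _
      · rw [← hg_xs]
        exact hmono.monotoneOn (hsub hx) hxs1 hx.2
    · intro y hy
      have hev : ∀ᶠ x in nhdsWithin 0 (Set.Ioi (0:ℝ)),
          thalerG γ x < y ∧ x < xs ∧ 0 < x := by
        filter_upwards [htend.eventually_lt_const hy.1,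
          eventually_nhdsWithin_of_eventually_nhds (eventually_lt_nhds hxs.1),
          self_mem_nhdsWithin] with x h1 h2 h3
        exact ⟨h1, h2, h3⟩
      obtain ⟨x0, hx0⟩ := hev.exists
      have hx0sub : Set.Icc x0 xs ⊆ Set.Ioc (0:ℝ) 1 := fun z hz =>
        ⟨lt_of_lt_of_le hx0.2.2 hz.1, le_trans hz.2 (le_of_lt hxs.2)⟩
      have hcontOn : ContinuousOn (thalerG γ) (Set.Icc x0 xs) := fun z hz =>
        (hcont z (hx0sub hz)).continuousWithinAt
      have := intermediate_value_Icc (le_of_lt hx0.2.1) hcontOn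
      have hy' : y ∈ Set.Icc (thalerG γ x0) (thalerG γ xs) := by
        rw [hg_xs]; exact ⟨le_of_lt hx0.1, hy.2⟩
      obtain ⟨x, hxmem, hxval⟩ := this hy'
      exact ⟨x, ⟨lt_of_lt_of_le hx0.2.2 hxmem.1, hxmem.2⟩, hxval⟩
  · -- BijOn (xs, 1] → (1, 2]
    have hsub : Set.Ioc xs 1 ⊆ Set.Ioc (0:ℝ) 1 := Set.Ioc_subset_Ioc_left (le_of_lt hxs.1)
    have hxs1 : xs ∈ Set.Ioc (0:ℝ) 1 := ⟨hxs.1, le_of_lt hxs.2⟩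
    have h1mem : (1:ℝ) ∈ Set.Ioc (0:ℝ) 1 := ⟨one_pos, le_refl 1⟩
    refine ⟨?_, hmono.injOn.mono hsub, ?_⟩
    · intro x hx
      refine ⟨?_, ?_⟩
      · rw [← hg_xs]; exact hmono hxs1 (hsub hx) hx.1
      · rw [← hg_1]; exact hmono.monotoneOn (hsub hx) h1mem hx.2
    · intro y hy
      have hcontOn : ContinuousOn (thalerG γ) (Set.Icc xs 1) := fun z hz =>
        (hcont z ⟨lt_of_lt_of_le hxs.1 hz.1, hz.2⟩).continuousWithinAt
      have := intermediate_value_Icc (le_of_lt hxs.2) hcontOn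
      have hy' : y ∈ Set.Icc (thalerG γ xs) (thalerG γ 1) := by
        rw [hg_xs, hg_1]; exact ⟨le_of_lt hy.1, hy.2⟩
      obtain ⟨x, hxmem, hxval⟩ := this hy'
      refine ⟨x, ⟨?_, hxmem.2⟩, hxval⟩
      rcases eq_or_lt_of_le hxmem.1 with h | h
      · exfalso; rw [h, hxval] at hg_xs; linarith [hy.1]
      · exact h
end
end

section
/- For every x ∈ (0,1] one has g(x) > x, and g(x)/x → 1 as x → 0+; i.e. the left branch of the Thaler map strictly increases orbits while 0 is a neutral fixed point. -/
open Real Set Filter Topology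

noncomputable section

/-- For every `x ∈ (0,1]` one has `g(x) > x`, and `g(x)/x → 1` as `x → 0+`;
i.e. the left branch of the Thaler map strictly increases orbits while `0` is a
neutral fixed point. -/
theorem thalerG_gt_and_neutral (γ : ℝ)
    (hγ : γ ∈ Set.Ioo (0 : ℝ) 1 ∪ Set.Ioi (1 : ℝ)) :
    (∀ x ∈ Set.Ioc (0 : ℝ) 1, x < thalerG γ x) ∧
    Tendsto (fun x => thalerG γ x / x) (nhdsWithin 0 (Set.Ioi (0 : ℝ))) (nhds 1) := by
  set s : ℝ := 1 - γ with hsdef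
  have hγ0 : 0 < γ := by
    rcases hγ with h | h
    · exact h.1
    · linarith [Set.mem_Ioi.mp h]
  have hscase : 0 < s ∨ s < 0 := by
    rcases hγ with h | h
    · exact Or.inl (by simp only [hsdef]; linarith [h.2])
    · exact Or.inr (by simp only [hsdef]; linarith [Set.mem_Ioi.mp h])
  have hs_ne : s ≠ 0 := by rcases hscase with h | h <;> [exact ne_of_gt h; exact ne_of_lt h]
  -- positivity of the inner expression
  have hA : ∀ x ∈ Set.Ioc (0 : ℝ) 1, 0 < x ^ s + (1 + x) ^ s - 1 := by
    intro x hx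
    obtain ⟨hx0, hx1⟩ := hx
    rcases hscase with hs | hs
    · have h1 : 1 < (1 + x) ^ s :=
        (Real.one_lt_rpow_iff_of_pos (by linarith)).mpr (Or.inl ⟨by linarith, hs⟩)
      have h2 : 0 < x ^ s := Real.rpow_pos_of_pos hx0 s
      linarith
    · have h1 : 1 ≤ x ^ s :=
        Real.one_le_rpow_of_pos_of_le_one_of_nonpos hx0 hx1 hs.le
      have h2 : 0 < (1 + x) ^ s := Real.rpow_pos_of_pos (by linarith) s
      linarith
  have hxsx : ∀ x : ℝ, 0 < x → (x ^ s) ^ (1 / s) = x := by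
    intro x hx
    rw [← Real.rpow_mul hx.le, mul_one_div, div_self hs_ne, Real.rpow_one]
  constructor
  · -- part 1
    intro x hx
    obtain ⟨hx0, hx1⟩ := hx
    have hApos := hA x ⟨hx0, hx1⟩
    have hxs : (0 : ℝ) < x ^ s := Real.rpow_pos_of_pos hx0 s
    have key : x < (x ^ s + (1 + x) ^ s - 1) ^ (1 / s) := by
      rcases hscase with hs | hs
      · have h1 : x ^ s < x ^ s + (1 + x) ^ s - 1 := by
          have : 1 < (1 + x) ^ s :=
            (Real.one_lt_rpow_iff_of_pos (by linarith)).mpr (Or.inl ⟨by linarith, hs⟩)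
          linarith
        calc x = (x ^ s) ^ (1 / s) := (hxsx x hx0).symm
          _ < (x ^ s + (1 + x) ^ s - 1) ^ (1 / s) :=
            Real.rpow_lt_rpow hxs.le h1 (by positivity)
      · have h1 : x ^ s + (1 + x) ^ s - 1 < x ^ s := by
          have : (1 + x) ^ s < 1 :=
            Real.rpow_lt_one_of_one_lt_of_neg (by linarith) hs
          linarith
        calc x = (x ^ s) ^ (1 / s) := (hxsx x hx0).symm
          _ < (x ^ s + (1 + x) ^ s - 1) ^ (1 / s) :=
            Real.rpow_lt_rpow_of_neg hApos h1 (by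
              simpa using inv_neg''.mpr hs)
      
    simpa [thalerG, ← hsdef] using key
  · -- part 2
    -- auxiliary limit: slope of t ↦ (1+t)^s at 0 tends to s
    have hd : HasDerivAt (fun t : ℝ => (1 + t) ^ s) s 0 := by
      have h1 : HasDerivAt (fun t : ℝ => 1 + t) 1 0 := by
        simpa using (hasDerivAt_id (0 : ℝ)).const_add 1
      have h0 : HasDerivAt (fun x : ℝ => x ^ s) (s * (1:ℝ) ^ (s - 1)) ((1:ℝ) + 0) := by
        simpa using Real.hasDerivAt_rpow_const (x := (1 : ℝ)) (p := s) (Or.inl one_ne_zero)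
      have h2 := h0.comp 0 h1
      simpa [Function.comp_def] using h2
    have hslope : Tendsto (fun x : ℝ => ((1 + x) ^ s - 1) / x) (𝓝[>] (0 : ℝ)) (𝓝 s) := by
      have h := hasDerivAt_iff_tendsto_slope.mp hd
      have h' : Tendsto (slope (fun t : ℝ => (1 + t) ^ s) 0) (𝓝[>] (0 : ℝ)) (𝓝 s) :=
        h.mono_left (nhdsWithin_mono _ (fun y hy => ne_of_gt hy))
      refine h'.congr (fun x => ?_)
      simp [slope_def_field, div_eq_mul_inv]
    have hpow : Tendsto (fun x : ℝ => x ^ γ) (𝓝[>] (0 : ℝ)) (𝓝 0) := by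
      have h := (Real.continuousAt_rpow_const 0 γ (Or.inr hγ0.le)).tendsto
      rw [Real.zero_rpow hγ0.ne'] at h
      exact h.mono_left nhdsWithin_le_nhds
    have hF : Tendsto (fun x : ℝ => 1 + ((1 + x) ^ s - 1) / x * x ^ γ)
        (𝓝[>] (0 : ℝ)) (𝓝 1) := by
      have h := (tendsto_const_nhds (x := (1:ℝ))).add (hslope.mul hpow)
      simpa using h
    have hcont : ContinuousAt (fun t : ℝ => t ^ (1 / s)) 1 :=
      Real.continuousAt_rpow_const 1 (1 / s) (Or.inl one_ne_zero)
    have hfinal : Tendsto (fun x : ℝ => (1 + ((1 + x) ^ s - 1) / x * x ^ γ) ^ (1 / s))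
        (𝓝[>] (0 : ℝ)) (𝓝 1) := by
      have := (hcont.tendsto).comp hF
      simpa [Real.one_rpow, Function.comp_def] using this
    refine hfinal.congr' ?_
    filter_upwards [Ioo_mem_nhdsGT_of_mem (by norm_num : (0 : ℝ) ∈ Set.Ico (0 : ℝ) 1)]
      with x hx
    obtain ⟨hx0, hx1⟩ := hx
    have hApos := hA x ⟨hx0, hx1.le⟩
    have hxs : (0 : ℝ) < x ^ s := Real.rpow_pos_of_pos hx0 s
    have hxγ : x ^ γ = x / x ^ s := by
      have : γ = 1 - s := by simp [hsdef]
      rw [this, Real.rpow_sub hx0, Real.rpow_one]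
    have hFx : 1 + ((1 + x) ^ s - 1) / x * x ^ γ
        = (x ^ s + (1 + x) ^ s - 1) / x ^ s := by
      rw [hxγ]
      field_simp
      ring
    rw [hFx, Real.div_rpow hApos.le hxs.le, hxsx x hx0]
    simp [thalerG, ← hsdef]
end
end

section
/- For every γ ∈ (0,1)∪(1,∞), ∫_{x*}^1 (x^{-γ} + (x+1)^{-γ}) dx = (2^{1-γ} − 1)/(1−γ), which is positive and finite; in particular the measure with density h restricted to Y = (x*,1] is a finite measure for all such γ. -/
open Real Set MeasureTheory intervalIntegral

/-- For every `γ ∈ (0,1) ∪ (1,∞)`,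
`∫_{x*}^1 (x^(-γ) + (x+1)^(-γ)) dx = (2^(1-γ) − 1)/(1−γ)`, which is positive and finite;
in particular the measure with density `h` restricted to `Y = (x*,1]` is a finite measure. -/
theorem thaler_density_integral_over_Y (γ : ℝ)
    (hγ : γ ∈ Set.Ioo (0 : ℝ) 1 ∪ Set.Ioi (1 : ℝ))
    (xs : ℝ) (hxs : xs ∈ Set.Ioo (0 : ℝ) 1)
    (hxseq : xs ^ (1 - γ) + (1 + xs) ^ (1 - γ) = 2) :
    IntervalIntegrable (fun x => x ^ (-γ) + (x + 1) ^ (-γ)) volume xs 1 ∧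
    (∫ x in xs..1, (x ^ (-γ) + (x + 1) ^ (-γ))) = (2 ^ (1 - γ) - 1) / (1 - γ) ∧
    0 < (2 ^ (1 - γ) - 1) / (1 - γ) := by
  obtain ⟨hxs0, hxs1⟩ := hxs
  have hγ1 : γ ≠ 1 := by
    rcases hγ with h | h
    · exact ne_of_lt h.2
    · exact ne_of_gt h
  have h1γ : (1 : ℝ) - γ ≠ 0 := sub_ne_zero.mpr (Ne.symm hγ1)
  have hne : -γ ≠ -1 := fun h => hγ1 (by linarith [neg_injective h])
  have hmem : (0 : ℝ) ∉ Set.uIcc xs 1 := by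
    intro h
    rcases Set.mem_uIcc.mp h with ⟨h1, _⟩ | ⟨h1, _⟩ <;> nlinarith
  -- continuity-based integrability
  have c1 : ContinuousOn (fun x : ℝ => x ^ (-γ)) (Set.uIcc xs 1) := by
    intro x hx
    have hx0 : x ≠ 0 := fun h => hmem (h ▸ hx)
    exact (Real.continuousAt_rpow_const x (-γ) (Or.inl hx0)).continuousWithinAt
  have c2 : ContinuousOn (fun x : ℝ => (x + 1) ^ (-γ)) (Set.uIcc xs 1) := by
    intro x hx
    have hx1 : x + 1 ≠ 0 := by
      rcases Set.mem_uIcc.mp hx with ⟨h1, _⟩ | ⟨h1, _⟩ <;> nlinarith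
    exact (ContinuousAt.rpow_const ((continuous_add_right 1).continuousAt)
      (Or.inl hx1)).continuousWithinAt
  have hint1 : IntervalIntegrable (fun x : ℝ => x ^ (-γ)) volume xs 1 :=
    c1.intervalIntegrable
  have hint2 : IntervalIntegrable (fun x : ℝ => (x + 1) ^ (-γ)) volume xs 1 :=
    c2.intervalIntegrable
  refine ⟨hint1.add hint2, ?_, ?_⟩
  · have hmem' : (0 : ℝ) ∉ Set.uIcc (xs + 1) (1 + 1) := by
      intro h
      rcases Set.mem_uIcc.mp h with ⟨h1, _⟩ | ⟨h1, _⟩ <;> nlinarith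
    have e1 : (∫ x in xs..1, x ^ (-γ)) = (1 ^ (-γ + 1) - xs ^ (-γ + 1)) / (-γ + 1) :=
      integral_rpow (Or.inr ⟨hne, hmem⟩)
    have e2 : (∫ x in xs..1, (x + 1) ^ (-γ))
        = ((1 + 1 : ℝ) ^ (-γ + 1) - (xs + 1) ^ (-γ + 1)) / (-γ + 1) := by
      rw [intervalIntegral.integral_comp_add_right (fun x : ℝ => x ^ (-γ)) 1]
      exact integral_rpow (Or.inr ⟨hne, hmem'⟩)
    rw [intervalIntegral.integral_add hint1 hint2, e1, e2]
    have h11 : (-γ + 1 : ℝ) = 1 - γ := by ring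
    rw [h11, Real.one_rpow]
    have h12 : ((1 : ℝ) + 1) = 2 := by norm_num
    have h13 : (xs + 1 : ℝ) = 1 + xs := by ring
    rw [h12, h13]
    field_simp
    linarith [hxseq]
  · rcases hγ with h | h
    · apply div_pos _ (by linarith [h.2])
      have : (1 : ℝ) < 2 ^ (1 - γ) := by
        rw [show (1 : ℝ) = 2 ^ (0 : ℝ) by simp]
        exact Real.rpow_lt_rpow_left_iff (by norm_num) |>.mpr (by linarith [h.2])
      linarith
    · have hn : 2 ^ (1 - γ) - 1 < (0 : ℝ) := by
        have : (2 : ℝ) ^ (1 - γ) < 1 :=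
          Real.rpow_lt_one_of_one_lt_of_neg (by norm_num) (by linarith [Set.mem_Ioi.mp h])
        linarith
      have hd : (1 : ℝ) - γ < 0 := by linarith [Set.mem_Ioi.mp h]
      exact div_pos_of_neg_of_neg hn hd
end

section
/- For every γ ∈ (0,1)∪(1,∞), the measure μ on [0,1] with density h(x) = x^{-γ} + (x+1)^{-γ} with respect to Lebesgue measure is invariant under the Thaler map T: for every measurable set A ⊆ [0,1], μ(T^{-1}A) = μ(A). (For γ ∈ (0,1) this measure is finite; for γ > 1 it is σ-finite but infinite.) -/
open Real Set MeasureTheory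
open scoped ENNReal

noncomputable section

/-- The Thaler map with branch point `xs`: `T 0 = 0`, `T x = g x` on `(0, xs]` and
`T x = g x − 1` on `(xs, 1]`. -/
def thalerT (γ xs : ℝ) (x : ℝ) : ℝ :=
  if x ≤ 0 then 0 else if x ≤ xs then thalerG γ x else thalerG γ x - 1

/-- The invariant density `h(x) = x^(-γ) + (x+1)^(-γ)`. -/
def thalerH (γ x : ℝ) : ℝ := x ^ (-γ) + (x + 1) ^ (-γ)

/-- The measure `μ` on `[0,1]` with density `h` with respect to Lebesgue measure. -/
def thalerMu (γ : ℝ) : Measure ℝ :=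
  (volume.restrict (Set.Icc (0 : ℝ) 1)).withDensity fun x => ENNReal.ofReal (thalerH γ x)

/-- inner function -/
def thalerU (γ x : ℝ) : ℝ := x ^ (1 - γ) + (1 + x) ^ (1 - γ) - 1

variable {γ xs : ℝ}

lemma thaler_gamma_pos (hγ : γ ∈ Set.Ioo (0:ℝ) 1 ∪ Set.Ioi 1) : 0 < γ := by
  rcases hγ with h | h
  · exact h.1
  · linarith [mem_Ioi.mp h]

lemma thaler_p_ne (hγ : γ ∈ Set.Ioo (0:ℝ) 1 ∪ Set.Ioi 1) : (1:ℝ) - γ ≠ 0 := by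
  rcases hγ with h | h
  · have := h.2; intro h'; linarith
  · have := mem_Ioi.mp h; intro h'; linarith

lemma thalerU_pos (hγ : γ ∈ Set.Ioo (0:ℝ) 1 ∪ Set.Ioi 1) {x : ℝ} (hx : 0 < x) (hx1 : x ≤ 1) :
    0 < thalerU γ x := by
  unfold thalerU
  rcases hγ with h | h
  · have hp : (0:ℝ) ≤ 1 - γ := by linarith [h.2]
    have h1 : 0 < x ^ (1 - γ) := Real.rpow_pos_of_pos hx _
    have h2 : (1:ℝ) ≤ (1 + x) ^ (1 - γ) := by
      calc (1:ℝ) = 1 ^ (1 - γ) := (Real.one_rpow _).symm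
      _ ≤ (1 + x) ^ (1 - γ) := Real.rpow_le_rpow zero_le_one (by linarith) hp
    linarith
  · have hp : (1:ℝ) - γ ≤ 0 := by linarith [mem_Ioi.mp h]
    have h1 : (1:ℝ) ≤ x ^ (1 - γ) := by
      calc (1:ℝ) = 1 ^ (1 - γ) := (Real.one_rpow _).symm
      _ ≤ x ^ (1 - γ) := Real.rpow_le_rpow_of_nonpos hx hx1 hp
    have h2 : 0 < (1 + x) ^ (1 - γ) := Real.rpow_pos_of_pos (by linarith) _
    linarith

lemma thalerG_pos (hγ : γ ∈ Set.Ioo (0:ℝ) 1 ∪ Set.Ioi 1) {x : ℝ} (hx : 0 < x) (hx1 : x ≤ 1) :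
    0 < thalerG γ x :=
  Real.rpow_pos_of_pos (thalerU_pos hγ hx hx1) _

lemma thalerG_strict (hγ : γ ∈ Set.Ioo (0:ℝ) 1 ∪ Set.Ioi 1) {x y : ℝ} (hx : 0 < x)
    (hxy : x < y) (hy1 : y ≤ 1) : thalerG γ x < thalerG γ y := by
  have hux := thalerU_pos hγ hx (by linarith)
  have huy := thalerU_pos hγ (hx.trans hxy) hy1
  unfold thalerG
  show thalerU γ x ^ (1/(1-γ)) < thalerU γ y ^ (1/(1-γ))
  rcases hγ with h | h
  · have hp : (0:ℝ) < 1 - γ := by linarith [h.2]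
    have hU : thalerU γ x < thalerU γ y := by
      unfold thalerU
      have h1 := Real.rpow_lt_rpow hx.le hxy hp
      have h2 := Real.rpow_lt_rpow (show (0:ℝ) ≤ 1 + x by linarith)
        (show (1:ℝ) + x < 1 + y by linarith) hp
      linarith
    exact Real.rpow_lt_rpow hux.le hU (by positivity)
  · have hp : (1:ℝ) - γ < 0 := by linarith [mem_Ioi.mp h]
    have hU : thalerU γ y < thalerU γ x := by
      unfold thalerU
      have h1 := Real.rpow_lt_rpow_of_neg hx hxy hp
      have h2 := Real.rpow_lt_rpow_of_neg (show (0:ℝ) < 1 + x by linarith)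
        (show (1:ℝ) + x < 1 + y by linarith) hp
      linarith
    exact Real.rpow_lt_rpow_of_neg huy hU (by simpa using one_div_neg.mpr hp)

lemma thalerU_xs (hxseq : xs ^ (1 - γ) + (1 + xs) ^ (1 - γ) = 2) : thalerU γ xs = 1 := by
  unfold thalerU; rw [hxseq]; norm_num

lemma thalerG_xs (hxseq : xs ^ (1 - γ) + (1 + xs) ^ (1 - γ) = 2) : thalerG γ xs = 1 := by
  unfold thalerG; rw [hxseq]; norm_num

lemma thalerU_one : thalerU γ 1 = 2 ^ (1 - γ) := by
  unfold thalerU; rw [Real.one_rpow]; norm_num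

lemma thalerG_one (hγ : γ ∈ Set.Ioo (0:ℝ) 1 ∪ Set.Ioi 1) : thalerG γ 1 = 2 := by
  have hp := thaler_p_ne hγ
  unfold thalerG
  have e : (1:ℝ) ^ (1-γ) + (1+1:ℝ) ^ (1-γ) - 1 = 2 ^ (1-γ) := by
    rw [Real.one_rpow]; norm_num
  rw [e, ← Real.rpow_mul (by norm_num), mul_one_div, div_self hp, Real.rpow_one]

lemma thalerU_continuousOn {a b : ℝ} (ha : 0 < a) : ContinuousOn (thalerU γ) (Icc a b) := by
  unfold thalerU
  refine ContinuousOn.sub (ContinuousOn.add ?_ ?_) continuousOn_const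
  · exact continuousOn_id.rpow_const fun x hx => Or.inl (ne_of_gt (lt_of_lt_of_le ha hx.1))
  · exact (continuousOn_const.add continuousOn_id).rpow_const
      fun x hx => Or.inl (by have := lt_of_lt_of_le ha hx.1; intro h; simp at h; linarith)

lemma thalerG_of_U {x y : ℝ} (hγ : γ ∈ Set.Ioo (0:ℝ) 1 ∪ Set.Ioi 1) (hy : 0 ≤ y)
    (hU : thalerU γ x = y ^ (1 - γ)) : thalerG γ x = y := by
  have hp := thaler_p_ne hγ
  show thalerU γ x ^ (1/(1-γ)) = y
  rw [hU, ← Real.rpow_mul hy, mul_one_div, div_self hp, Real.rpow_one]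

lemma exists_branch1 (hγ : γ ∈ Set.Ioo (0:ℝ) 1 ∪ Set.Ioi 1) (hxs : xs ∈ Set.Ioo (0:ℝ) 1)
    (hxseq : xs ^ (1 - γ) + (1 + xs) ^ (1 - γ) = 2) {y : ℝ} (hy0 : 0 < y) (hy1 : y ≤ 1) :
    ∃ x ∈ Ioc 0 xs, thalerG γ x = y := by
  have hp := thaler_p_ne hγ
  set c := y ^ (1 - γ) with hc
  have hcpos : 0 < c := Real.rpow_pos_of_pos hy0 _
  have hUxs : thalerU γ xs = 1 := thalerU_xs hxseq
  suffices hsuf : ∃ x ∈ Ioc 0 xs, thalerU γ x = c by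
    obtain ⟨x, hx, hUx⟩ := hsuf
    exact ⟨x, hx, thalerG_of_U hγ hy0.le hUx⟩
  rcases hγ with h | h
  · have hp0 : (0:ℝ) < 1 - γ := by linarith [h.2]
    have hγ0 := h.1
    set a := min xs (min (c/2) ((c/2) ^ (1/(1-γ)))) with hadef
    have ha0 : 0 < a := lt_min hxs.1 (lt_min (by positivity) (by positivity))
    have haxs : a ≤ xs := min_le_left _ _
    have hUa : thalerU γ a ≤ c := by
      have h1 : a ^ (1-γ) ≤ c/2 := by
        calc a ^ (1-γ) ≤ ((c/2) ^ (1/(1-γ))) ^ (1-γ) :=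
              Real.rpow_le_rpow ha0.le (le_trans (min_le_right _ _) (min_le_right _ _)) hp0.le
        _ = c/2 := by
            rw [← Real.rpow_mul (by positivity), one_div, inv_mul_cancel₀ hp, Real.rpow_one]
      have h2 : (1+a) ^ (1-γ) ≤ 1 + a := by
        calc (1+a)^(1-γ) ≤ (1+a)^(1:ℝ) :=
              Real.rpow_le_rpow_of_exponent_le (by linarith) (by linarith)
        _ = 1 + a := Real.rpow_one _
      have h3 : a ≤ c/2 := le_trans (min_le_right _ _) (min_le_left _ _)
      unfold thalerU; linarith
    have hcle : c ≤ thalerU γ xs := by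
      rw [hUxs]; exact Real.rpow_le_one hy0.le hy1 hp0.le
    obtain ⟨x, hxmem, hxval⟩ := intermediate_value_Icc haxs (thalerU_continuousOn ha0)
      (show c ∈ Icc (thalerU γ a) (thalerU γ xs) from ⟨hUa, hcle⟩)
    exact ⟨x, ⟨lt_of_lt_of_le ha0 hxmem.1, hxmem.2⟩, hxval⟩
  · have hp0 : (1:ℝ) - γ < 0 := by linarith [mem_Ioi.mp h]
    set b := (c+1) ^ (1/(1-γ)) with hbdef
    have hb0 : 0 < b := Real.rpow_pos_of_pos (by linarith) _
    set a := min xs b with hadef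
    have ha0 : 0 < a := lt_min hxs.1 hb0
    have haxs : a ≤ xs := min_le_left _ _
    have hUa : c ≤ thalerU γ a := by
      have hbp : b ^ (1-γ) = c + 1 := by
        rw [hbdef, ← Real.rpow_mul (by linarith : (0:ℝ) ≤ c+1), one_div,
          inv_mul_cancel₀ hp, Real.rpow_one]
      have h1 : (c+1 : ℝ) ≤ a ^ (1-γ) := by
        have := Real.rpow_le_rpow_of_nonpos ha0 (min_le_right xs b) hp0.le
        rw [hbp] at this; exact this
      have h2 : 0 < (1+a) ^ (1-γ) := Real.rpow_pos_of_pos (by linarith) _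
      unfold thalerU; linarith
    have hcge : thalerU γ xs ≤ c := by
      rw [hUxs]; exact Real.one_le_rpow_of_pos_of_le_one_of_nonpos hy0 hy1 hp0.le
    obtain ⟨x, hxmem, hxval⟩ := intermediate_value_Icc' haxs (thalerU_continuousOn ha0)
      (show c ∈ Icc (thalerU γ xs) (thalerU γ a) from ⟨hcge, hUa⟩)
    exact ⟨x, ⟨lt_of_lt_of_le ha0 hxmem.1, hxmem.2⟩, hxval⟩

lemma exists_branch2 (hγ : γ ∈ Set.Ioo (0:ℝ) 1 ∪ Set.Ioi 1) (hxs : xs ∈ Set.Ioo (0:ℝ) 1)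
    (hxseq : xs ^ (1 - γ) + (1 + xs) ^ (1 - γ) = 2) {y : ℝ} (hy0 : 0 < y) (hy1 : y ≤ 1) :
    ∃ x ∈ Ioc xs 1, thalerG γ x = 1 + y := by
  have hp := thaler_p_ne hγ
  set c := (1 + y) ^ (1 - γ) with hc
  have hUxs : thalerU γ xs = 1 := thalerU_xs hxseq
  have hU1 : thalerU γ 1 = 2 ^ (1-γ) := thalerU_one
  have hxs1 : xs ≤ 1 := hxs.2.le
  suffices hsuf : ∃ x ∈ Ioc xs 1, thalerU γ x = c by
    obtain ⟨x, hx, hUx⟩ := hsuf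
    exact ⟨x, hx, thalerG_of_U hγ (by linarith) hUx⟩
  rcases hγ with h | h
  · have hp0 : (0:ℝ) < 1 - γ := by linarith [h.2]
    have h1 : 1 < c := Real.one_lt_rpow (by linarith) hp0
    have h2 : c ≤ 2 ^ (1-γ) := Real.rpow_le_rpow (by linarith) (by linarith) hp0.le
    obtain ⟨x, hxmem, hxval⟩ := intermediate_value_Icc hxs1 (thalerU_continuousOn hxs.1)
      (show c ∈ Icc (thalerU γ xs) (thalerU γ 1) by
        rw [hUxs, hU1]; exact ⟨h1.le, h2⟩)
    refine ⟨x, ⟨?_, hxmem.2⟩, hxval⟩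
    rcases eq_or_lt_of_le hxmem.1 with heq | hlt
    · exfalso; rw [← heq, hUxs] at hxval; linarith
    · exact hlt
  · have hp0 : (1:ℝ) - γ < 0 := by linarith [mem_Ioi.mp h]
    have h1 : c < 1 := Real.rpow_lt_one_of_one_lt_of_neg (by linarith) hp0
    have h2 : 2 ^ (1-γ) ≤ c := Real.rpow_le_rpow_of_nonpos (by linarith) (by linarith) hp0.le
    obtain ⟨x, hxmem, hxval⟩ := intermediate_value_Icc' hxs1 (thalerU_continuousOn hxs.1)
      (show c ∈ Icc (thalerU γ 1) (thalerU γ xs) by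
        rw [hUxs, hU1]; exact ⟨h2, h1.le⟩)
    refine ⟨x, ⟨?_, hxmem.2⟩, hxval⟩
    rcases eq_or_lt_of_le hxmem.1 with heq | hlt
    · exfalso; rw [← heq, hUxs] at hxval; linarith
    · exact hlt

lemma hasDerivAt_thalerG (hγ : γ ∈ Set.Ioo (0:ℝ) 1 ∪ Set.Ioi 1) {x : ℝ} (hx : 0 < x)
    (hx1 : x ≤ 1) :
    HasDerivAt (thalerG γ) (thalerH γ x * thalerU γ x ^ (γ/(1-γ))) x := by
  have hp := thaler_p_ne hγ
  have hu := thalerU_pos hγ hx hx1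
  have h1 : HasDerivAt (fun t : ℝ => t ^ (1-γ)) ((1-γ) * x ^ (1-γ-1)) x :=
    Real.hasDerivAt_rpow_const (Or.inl hx.ne')
  have hinner : HasDerivAt (fun t : ℝ => 1 + t) 1 x := (hasDerivAt_id x).const_add 1
  have h2 : HasDerivAt (fun t : ℝ => (1+t) ^ (1-γ)) ((1-γ) * (1+x) ^ (1-γ-1) * 1) x :=
    (Real.hasDerivAt_rpow_const (x := 1+x) (p := 1-γ) (Or.inl (by positivity))).comp x hinner
  have hU : HasDerivAt (thalerU γ)
      ((1-γ) * x ^ (1-γ-1) + (1-γ) * (1+x) ^ (1-γ-1) * 1) x := by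
    have := (h1.add h2).sub_const 1
    exact this
  have hg := hU.rpow_const (p := 1/(1-γ)) (Or.inl hu.ne')
  have hGdef : thalerG γ = fun x => thalerU γ x ^ (1/(1-γ)) := rfl
  rw [hGdef]
  convert hg using 1
  have e1 : (1:ℝ)-γ-1 = -γ := by ring
  have e2 : 1/(1-γ) - 1 = γ/(1-γ) := by field_simp; ring
  rw [e1, e2]
  unfold thalerH
  rw [show x + 1 = 1 + x by ring]
  field_simp

lemma thaler_key (hγ : γ ∈ Set.Ioo (0:ℝ) 1 ∪ Set.Ioi 1) {x : ℝ} (hx : 0 < x) (hx1 : x ≤ 1) :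
    thalerH γ x * thalerU γ x ^ (γ/(1-γ)) * thalerG γ x ^ (-γ) = thalerH γ x := by
  have hp := thaler_p_ne hγ
  have hu := thalerU_pos hγ hx hx1
  have hGdef : thalerG γ x = thalerU γ x ^ (1/(1-γ)) := rfl
  rw [hGdef, ← Real.rpow_mul hu.le, mul_assoc, ← Real.rpow_add hu]
  rw [show γ/(1-γ) + 1/(1-γ) * (-γ) = 0 by field_simp; ring, Real.rpow_zero, mul_one]

lemma thalerH_nonneg {x : ℝ} (hx : 0 ≤ x) : 0 ≤ thalerH γ x := by
  unfold thalerH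
  have := Real.rpow_nonneg hx (-γ)
  have := Real.rpow_nonneg (by linarith : (0:ℝ) ≤ x + 1) (-γ)
  linarith

lemma thaler_deriv_nonneg (hγ : γ ∈ Set.Ioo (0:ℝ) 1 ∪ Set.Ioi 1) {x : ℝ} (hx : 0 < x)
    (hx1 : x ≤ 1) : 0 ≤ thalerH γ x * thalerU γ x ^ (γ/(1-γ)) :=
  mul_nonneg (thalerH_nonneg hx.le) (Real.rpow_nonneg (thalerU_pos hγ hx hx1).le _)

lemma measurable_thalerG : Measurable (thalerG γ) := by
  unfold thalerG
  exact (((measurable_id.pow_const _).add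
    ((measurable_const.add measurable_id).pow_const _)).sub measurable_const).pow_const _

lemma lintegral_image_deriv {s : Set ℝ} {f f' : ℝ → ℝ} (hs : MeasurableSet s)
    (hf' : ∀ x ∈ s, HasDerivWithinAt f (f' x) s x) (hf : InjOn f s) (g : ℝ → ℝ≥0∞) :
    ∫⁻ x in f '' s, g x = ∫⁻ x in s, ENNReal.ofReal |f' x| * g (f x) := by
  simpa only [ContinuousLinearMap.det_toSpanSingleton] using
    lintegral_image_eq_lintegral_abs_det_fderiv_mul volume hs
      (fun x hx => (hf' x hx).hasFDerivWithinAt) hf g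

/-- For every `γ ∈ (0,1) ∪ (1,∞)`, the measure `μ` on `[0,1]` with density
`h(x) = x^(-γ) + (x+1)^(-γ)` with respect to Lebesgue measure is invariant under the
Thaler map `T`: for every measurable `A ⊆ [0,1]`, `μ(T⁻¹ A) = μ(A)`. -/
theorem thalerMu_invariant (γ : ℝ)
    (hγ : γ ∈ Set.Ioo (0 : ℝ) 1 ∪ Set.Ioi (1 : ℝ))
    (xs : ℝ) (hxs : xs ∈ Set.Ioo (0 : ℝ) 1)
    (hxseq : xs ^ (1 - γ) + (1 + xs) ^ (1 - γ) = 2) :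
    ∀ A : Set ℝ, A ⊆ Set.Icc (0 : ℝ) 1 → MeasurableSet A →
      thalerMu γ (thalerT γ xs ⁻¹' A) = thalerMu γ A := by
  intro A hA hAm
  have hxs1 : xs ≤ 1 := hxs.2.le
  have hGm : Measurable (thalerG γ) := measurable_thalerG
  have hTm : Measurable (thalerT γ xs) := by
    unfold thalerT
    refine Measurable.ite (measurableSet_le measurable_id measurable_const) measurable_const
      (Measurable.ite (measurableSet_le measurable_id measurable_const) hGm
        (hGm.sub measurable_const))
  have hTA : MeasurableSet (thalerT γ xs ⁻¹' A) := hTm hAm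
  have hμ : ∀ S : Set ℝ, MeasurableSet S →
      thalerMu γ S = ∫⁻ x in S ∩ Ioc 0 1, ENNReal.ofReal (thalerH γ x) := by
    intro S hS
    unfold thalerMu
    rw [withDensity_apply _ hS, Measure.restrict_restrict hS]
    exact setLIntegral_congr (ae_eq_set_inter (Filter.EventuallyEq.refl _ _) Ioc_ae_eq_Icc.symm)
  set B1 : Set ℝ := Ioc 0 xs ∩ thalerG γ ⁻¹' A with hB1def
  set B2 : Set ℝ := Ioc xs 1 ∩ (fun x => thalerG γ x - 1) ⁻¹' A with hB2def
  have hB1m : MeasurableSet B1 := measurableSet_Ioc.inter (hGm hAm)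
  have hB2m : MeasurableSet B2 := measurableSet_Ioc.inter ((hGm.sub measurable_const) hAm)
  have hB1sub : B1 ⊆ Ioc 0 xs := inter_subset_left
  have hB2sub : B2 ⊆ Ioc xs 1 := inter_subset_left
  have hB1Ioc : B1 ⊆ Ioc 0 1 := fun x hx => ⟨(hB1sub hx).1, (hB1sub hx).2.trans hxs1⟩
  have hB2Ioc : B2 ⊆ Ioc 0 1 := fun x hx => ⟨hxs.1.trans (hB2sub hx).1, (hB2sub hx).2⟩
  have hsplit : thalerT γ xs ⁻¹' A ∩ Ioc 0 1 = B1 ∪ B2 := by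
    ext x
    simp only [hB1def, hB2def, mem_inter_iff, mem_preimage, mem_union, mem_Ioc]
    constructor
    · rintro ⟨hTx, hx0, hx1⟩
      rw [thalerT, if_neg (not_le.mpr hx0)] at hTx
      by_cases hxxs : x ≤ xs
      · left; rw [if_pos hxxs] at hTx; exact ⟨⟨hx0, hxxs⟩, hTx⟩
      · right; rw [if_neg hxxs] at hTx; exact ⟨⟨not_le.mp hxxs, hx1⟩, hTx⟩
    · rintro (⟨⟨hx0, hxxs⟩, hA'⟩ | ⟨⟨hxxs, hx1⟩, hA'⟩)
      · refine ⟨?_, hx0, hxxs.trans hxs1⟩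
        rw [thalerT, if_neg (not_le.mpr hx0), if_pos hxxs]; exact hA'
      · refine ⟨?_, hxs.1.trans hxxs, hx1⟩
        rw [thalerT, if_neg (not_le.mpr (hxs.1.trans hxxs)), if_neg (not_le.mpr hxxs)]
        exact hA'
  have hdisj : Disjoint B1 B2 :=
    Set.disjoint_left.mpr fun x hx1 hx2 =>
      absurd (hB1sub hx1).2 (not_le.mpr (hB2sub hx2).1)
  have hsm : StrictMonoOn (thalerG γ) (Ioc 0 1) :=
    fun a ha b hb hab => thalerG_strict hγ ha.1 hab hb.2
  have hinj1 : InjOn (thalerG γ) B1 := hsm.injOn.mono hB1Ioc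
  have hinj2 : InjOn (fun x => thalerG γ x - 1) B2 := by
    intro a ha b hb hab
    have h' : thalerG γ a = thalerG γ b := by
      simp only at hab; linarith
    exact hsm.injOn (hB2Ioc ha) (hB2Ioc hb) h'
  have hder1 : ∀ x ∈ B1,
      HasDerivWithinAt (thalerG γ) (thalerH γ x * thalerU γ x ^ (γ/(1-γ))) B1 x := fun x hx =>
    (hasDerivAt_thalerG hγ (hB1Ioc hx).1 (hB1Ioc hx).2).hasDerivWithinAt
  have hder2 : ∀ x ∈ B2,
      HasDerivWithinAt (fun x => thalerG γ x - 1)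
        (thalerH γ x * thalerU γ x ^ (γ/(1-γ))) B2 x := fun x hx =>
    ((hasDerivAt_thalerG hγ (hB2Ioc hx).1 (hB2Ioc hx).2).sub_const 1).hasDerivWithinAt
  have himg1 : thalerG γ '' B1 = A ∩ Ioc 0 1 := by
    ext y; constructor
    · rintro ⟨x, ⟨hxI, hxA⟩, rfl⟩
      refine ⟨hxA, thalerG_pos hγ hxI.1 (hxI.2.trans hxs1), ?_⟩
      rcases eq_or_lt_of_le hxI.2 with heq | hlt
      · rw [heq, thalerG_xs hxseq]
      · exact le_of_lt (by
          rw [← thalerG_xs (γ := γ) hxseq]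
          exact thalerG_strict hγ hxI.1 hlt hxs1)
    · rintro ⟨hyA, hy0, hy1⟩
      obtain ⟨x, hx, hGx⟩ := exists_branch1 hγ hxs hxseq hy0 hy1
      exact ⟨x, ⟨hx, by rw [mem_preimage, hGx]; exact hyA⟩, hGx⟩
  have himg2 : (fun x => thalerG γ x - 1) '' B2 = A ∩ Ioc 0 1 := by
    ext y; constructor
    · rintro ⟨x, ⟨hxI, hxA⟩, rfl⟩
      refine ⟨hxA, ?_, ?_⟩
      · have h1 : (1:ℝ) < thalerG γ x := by
          rw [← thalerG_xs (γ := γ) hxseq]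
          exact thalerG_strict hγ hxs.1 hxI.1 hxI.2
        simp only; linarith
      · have h2 : thalerG γ x ≤ 2 := by
          rcases eq_or_lt_of_le hxI.2 with heq | hlt
          · rw [heq, thalerG_one hγ]
          · exact le_of_lt (by
              rw [← thalerG_one hγ]
              exact thalerG_strict hγ (hxs.1.trans hxI.1) hlt le_rfl)
        simp only; linarith
    · rintro ⟨hyA, hy0, hy1⟩
      obtain ⟨x, hx, hGx⟩ := exists_branch2 hγ hxs hxseq hy0 hy1
      have hyval : thalerG γ x - 1 = y := by rw [hGx]; ring
      exact ⟨x, ⟨hx, show thalerG γ x - 1 ∈ A by rw [hyval]; exact hyA⟩, hyval⟩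
  have hbranch1 : ∫⁻ x in B1, ENNReal.ofReal (thalerH γ x) =
      ∫⁻ y in A ∩ Ioc 0 1, ENNReal.ofReal (y ^ (-γ)) := by
    rw [← himg1, lintegral_image_deriv hB1m hder1 hinj1 (fun y => ENNReal.ofReal (y ^ (-γ)))]
    refine setLIntegral_congr_fun hB1m (fun x hx => ?_)
    have hx0 := (hB1Ioc hx).1
    have hx1 := (hB1Ioc hx).2
    have hnn := thaler_deriv_nonneg hγ hx0 hx1
    show ENNReal.ofReal (thalerH γ x) =
      ENNReal.ofReal |thalerH γ x * thalerU γ x ^ (γ/(1-γ))| *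
        ENNReal.ofReal (thalerG γ x ^ (-γ))
    rw [abs_of_nonneg hnn, ← ENNReal.ofReal_mul hnn, thaler_key hγ hx0 hx1]
  have hbranch2 : ∫⁻ x in B2, ENNReal.ofReal (thalerH γ x) =
      ∫⁻ y in A ∩ Ioc 0 1, ENNReal.ofReal ((y + 1) ^ (-γ)) := by
    rw [← himg2, lintegral_image_deriv hB2m hder2 hinj2
      (fun y => ENNReal.ofReal ((y + 1) ^ (-γ)))]
    refine setLIntegral_congr_fun hB2m (fun x hx => ?_)
    have hx0 := (hB2Ioc hx).1
    have hx1 := (hB2Ioc hx).2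
    have hnn := thaler_deriv_nonneg hγ hx0 hx1
    show ENNReal.ofReal (thalerH γ x) =
      ENNReal.ofReal |thalerH γ x * thalerU γ x ^ (γ/(1-γ))| *
        ENNReal.ofReal ((thalerG γ x - 1 + 1) ^ (-γ))
    have e : thalerG γ x - 1 + 1 = thalerG γ x := by ring
    rw [e, abs_of_nonneg hnn, ← ENNReal.ofReal_mul hnn, thaler_key hγ hx0 hx1]
  have hφ1m : Measurable fun y : ℝ => ENNReal.ofReal (y ^ (-γ)) :=
    (measurable_id.pow_const _).ennreal_ofReal
  rw [hμ _ hTA, hμ _ hAm, hsplit, lintegral_union hB2m hdisj, hbranch1, hbranch2,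
    ← lintegral_add_left hφ1m]
  refine setLIntegral_congr_fun (hAm.inter measurableSet_Ioc) (fun y hy => ?_)
  show ENNReal.ofReal (y ^ (-γ)) + ENNReal.ofReal ((y + 1) ^ (-γ)) =
    ENNReal.ofReal (thalerH γ y)
  rw [← ENNReal.ofReal_add (Real.rpow_nonneg hy.2.1.le _)
    (Real.rpow_nonneg (by linarith [hy.2.1.le] : (0:ℝ) ≤ y + 1) _)]
  rfl
end
end

section
/- There exist constants C > 0 and δ > 0 such that for all x ∈ (0,δ), |g(x) − x − x^{1+γ}| ≤ C·x^{1+γ+m}, where m = min(γ,1); i.e. the left branch of the Thaler map satisfies g(x) = x(1 + x^γ + O(x^{m})) as x → 0+. -/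
open Real Set

lemma rpow_le_two_rpow {b a : ℝ} (h1 : 1/2 ≤ b) (h2 : b ≤ 3/2) : b ^ a ≤ 2 ^ |a| := by
  have hb : 0 < b := lt_of_lt_of_le (by norm_num) h1
  rw [Real.rpow_def_of_pos hb, Real.rpow_def_of_pos (by norm_num : (0:ℝ) < 2)]
  apply Real.exp_le_exp.2
  have hlog : |Real.log b| ≤ Real.log 2 := by
    rw [abs_le]
    constructor
    · have := Real.log_le_log (by norm_num : (0:ℝ) < 1/2) h1
      rw [show (1/2 : ℝ) = 2⁻¹ by norm_num, Real.log_inv] at this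
      linarith
    · exact le_trans (Real.log_le_log hb h2) (Real.log_le_log (by norm_num) (by norm_num))
  calc Real.log b * a ≤ |Real.log b * a| := le_abs_self _
    _ = |Real.log b| * |a| := abs_mul _ _
    _ ≤ Real.log 2 * |a| := mul_le_mul_of_nonneg_right hlog (abs_nonneg _)

lemma lipschitz_aux (r : ℝ) {s : ℝ} (hs : |s| ≤ 1/2) :
    |(1+s)^r - 1| ≤ (|r| * 2^|r-1|) * |s| := by
  have habs := abs_le.1 hs
  have hconv : Convex ℝ (Icc (-(1/2):ℝ) (1/2)) := convex_Icc _ _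
  have hd : ∀ t ∈ Icc (-(1/2):ℝ) (1/2),
      HasDerivWithinAt (fun t => (1+t)^r) (r * (1+t)^(r-1)) (Icc (-(1/2):ℝ) (1/2)) t := by
    intro t ht
    have h1t : (0:ℝ) < 1 + t := by have := ht.1; linarith
    have h := (((hasDerivAt_id t).const_add 1).rpow_const (p := r)
      (Or.inl h1t.ne')).hasDerivWithinAt (s := Icc (-(1/2):ℝ) (1/2))
    simpa using h
  have hbound : ∀ t ∈ Icc (-(1/2):ℝ) (1/2), ‖r * (1+t)^(r-1)‖ ≤ |r| * 2^|r-1| := by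
    intro t ht
    have h1t : (1/2:ℝ) ≤ 1 + t := by have := ht.1; linarith
    have h1t' : (1 + t : ℝ) ≤ 3/2 := by have := ht.2; linarith
    rw [Real.norm_eq_abs, abs_mul, abs_of_nonneg (Real.rpow_nonneg (by linarith) _)]
    exact mul_le_mul_of_nonneg_left (rpow_le_two_rpow h1t h1t') (abs_nonneg _)
  have key := hconv.norm_image_sub_le_of_norm_hasDerivWithin_le hd hbound
    (x := 0) (y := s) (Set.mem_Icc.2 ⟨by norm_num, by norm_num⟩)
    (Set.mem_Icc.2 ⟨habs.1, habs.2⟩)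
  simpa using key

lemma quad_aux (r : ℝ) {s : ℝ} (hs : |s| ≤ 1/2) :
    |(1+s)^r - 1 - r*s| ≤ (|r| * (|r-1| * 2^|r-1-1|)) * s^2 := by
  have habs := abs_le.1 hs
  set S := Icc (-|s|) |s| with hS
  have hconv : Convex ℝ S := convex_Icc _ _
  have hd : ∀ t ∈ S, HasDerivWithinAt (fun t => (1+t)^r - 1 - r*t)
      (r * (1+t)^(r-1) - r) S t := by
    intro t ht
    have htabs : |t| ≤ |s| := abs_le.2 ⟨ht.1, ht.2⟩
    have h1t : (0:ℝ) < 1 + t := by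
      have := abs_le.1 (htabs.trans hs); linarith
    have h := (((hasDerivAt_id t).const_add 1).rpow_const (p := r) (Or.inl h1t.ne'))
    have h2 := ((h.sub_const 1).sub ((hasDerivAt_id t).const_mul r)).hasDerivWithinAt (s := S)
    simpa [Pi.sub_def] using h2
  have hbound : ∀ t ∈ S, ‖r * (1+t)^(r-1) - r‖ ≤ |r| * ((|r-1| * 2^|r-1-1|) * |s|) := by
    intro t ht
    have htabs : |t| ≤ |s| := abs_le.2 ⟨ht.1, ht.2⟩
    have hts : |t| ≤ 1/2 := htabs.trans hs
    have key := lipschitz_aux (r-1) hts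
    rw [Real.norm_eq_abs, show r * (1+t)^(r-1) - r = r * ((1+t)^(r-1) - 1) by ring, abs_mul]
    exact mul_le_mul_of_nonneg_left (key.trans
      (mul_le_mul_of_nonneg_left htabs (by positivity))) (abs_nonneg _)
  have h0 : (0:ℝ) ∈ S := Set.mem_Icc.2 ⟨neg_nonpos.2 (abs_nonneg _), abs_nonneg _⟩
  have hsS : s ∈ S := Set.mem_Icc.2 ⟨neg_abs_le _, le_abs_self _⟩
  have key := hconv.norm_image_sub_le_of_norm_hasDerivWithin_le hd hbound h0 hsS
  simp only [Real.norm_eq_abs, add_zero, Real.one_rpow, mul_zero, sub_zero, sub_self] at key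
  calc |(1+s)^r - 1 - r*s| ≤ |r| * ((|r-1| * 2^|r-1-1|) * |s|) * |s| := key
    _ = (|r| * (|r-1| * 2^|r-1-1|)) * s^2 := by rw [← sq_abs s]; ring

noncomputable section

/-- There exist constants `C > 0` and `δ > 0` such that for all `x ∈ (0,δ)`,
`|g(x) − x − x^(1+γ)| ≤ C·x^(1+γ+m)` where `m = min(γ,1)`; i.e. the left branch of the
Thaler map satisfies `g(x) = x(1 + x^γ + O(x^m))` as `x → 0+`. -/
theorem thalerG_asymptotics_at_zero (γ : ℝ)
    (hγ : γ ∈ Set.Ioo (0 : ℝ) 1 ∪ Set.Ioi (1 : ℝ)) :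
    ∃ C > (0 : ℝ), ∃ δ > (0 : ℝ), ∀ x ∈ Set.Ioo (0 : ℝ) δ,
      |thalerG γ x - x - x ^ (1 + γ)| ≤ C * x ^ (1 + γ + min γ 1) := by
  have hγ0 : 0 < γ := by
    rcases hγ with ⟨h, _⟩ | h
    · exact h
    · have := mem_Ioi.1 h; linarith
  have hγ1 : γ ≠ 1 := by
    rcases hγ with ⟨_, h⟩ | h
    · exact ne_of_lt h
    · exact (mem_Ioi.1 h).ne'
  set p := 1 - γ with hp_def
  have hp : p ≠ 0 := sub_ne_zero.2 (Ne.symm hγ1)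
  set q := 1 / (1 - γ) with hq_def
  have hpq : p * q = 1 := by
    rw [hp_def, hq_def]; field_simp
  set Kp := |p| * (|p-1| * 2^|p-1-1|) with hKp
  set Kq := |q| * (|q-1| * 2^|q-1-1|) with hKq
  have hKp0 : 0 ≤ Kp := by rw [hKp]; positivity
  have hKq0 : 0 ≤ Kq := by rw [hKq]; positivity
  set E := |p| + Kp with hE_def
  have hE0 : 0 ≤ E := by rw [hE_def]; positivity
  set D := 2*E + 1 with hD_def
  have hD0 : 0 < D := by rw [hD_def]; linarith
  refine ⟨Kq * E^2 + |q| * Kp + 1, by positivity, min (1/2) ((1/D)^(1/γ)), ?_, ?_⟩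
  · exact lt_min (by norm_num) (Real.rpow_pos_of_pos (by positivity) _)
  rintro x ⟨hx0, hxδ⟩
  have hx_half : x ≤ 1/2 := le_of_lt (lt_of_lt_of_le hxδ (min_le_left _ _))
  have hx1 : x ≤ 1 := hx_half.trans (by norm_num)
  have hxabs : |x| ≤ 1/2 := by rw [abs_of_pos hx0]; exact hx_half
  have hxγ0 : 0 ≤ x^γ := Real.rpow_nonneg hx0.le γ
  have hxγD : x^γ ≤ 1/D := by
    have h1 : x ≤ (1/D)^(1/γ) := le_of_lt (lt_of_lt_of_le hxδ (min_le_right _ _))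
    have h2 : x^γ ≤ ((1/D)^(1/γ))^γ := Real.rpow_le_rpow hx0.le h1 hγ0.le
    rwa [← Real.rpow_mul (by positivity : (0:ℝ) ≤ 1/D), one_div_mul_cancel hγ0.ne',
      Real.rpow_one] at h2
  -- Taylor bound at x
  have hR := quad_aux p hxabs
  rw [← hKp] at hR
  set R := (1+x)^p - 1 - p*x with hR_def
  set y := ((1+x)^p - 1) * x^(γ-1) with hy_def
  -- identities
  have id1 : x * x^(γ-1) = x^γ := by
    nth_rewrite 1 [← Real.rpow_one x]
    rw [← Real.rpow_add hx0]; congr 1; ring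
  have id2 : x^p * x^(γ-1) = 1 := by
    rw [← Real.rpow_add hx0, show p + (γ-1) = 0 by rw [hp_def]; ring, Real.rpow_zero]
  have id3 : x^2 * x^(γ-1) = x^(γ+1) := by
    rw [← Real.rpow_natCast x 2, ← Real.rpow_add hx0]
    congr 1; push_cast; ring
  have hy_eq : y = p * x^γ + R * x^(γ-1) := by
    rw [hy_def, show (1+x)^p - 1 = p*x + R by rw [hR_def]; ring, add_mul, mul_assoc, id1]
  have hxexp1 : x^(γ+1) ≤ x^γ :=
    Real.rpow_le_rpow_of_exponent_ge hx0 hx1 (by linarith)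
  have habs_y : |y| ≤ E * x^γ := by
    calc |y| = |p * x^γ + R * x^(γ-1)| := by rw [hy_eq]
      _ ≤ |p * x^γ| + |R * x^(γ-1)| := abs_add_le _ _
      _ = |p| * x^γ + |R| * x^(γ-1) := by
          rw [abs_mul, abs_mul, abs_of_nonneg hxγ0,
            abs_of_nonneg (Real.rpow_nonneg hx0.le _)]
      _ ≤ |p| * x^γ + (Kp * x^2) * x^(γ-1) := by
          exact add_le_add_right (mul_le_mul_of_nonneg_right hR
            (Real.rpow_nonneg hx0.le _)) _
      _ = |p| * x^γ + Kp * x^(γ+1) := by rw [mul_assoc, id3]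
      _ ≤ |p| * x^γ + Kp * x^γ := add_le_add_right (mul_le_mul_of_nonneg_left hxexp1 hKp0) _
      _ = E * x^γ := by rw [hE_def]; ring
  have hy_half : |y| ≤ 1/2 := by
    have h1 : E * x^γ ≤ E * (1/D) := mul_le_mul_of_nonneg_left hxγD hE0
    have h2 : E * (1/D) ≤ 1/2 := by
      rw [mul_one_div, div_le_iff₀ hD0]
      rw [hD_def]; linarith
    exact habs_y.trans (h1.trans h2)
  have h1y : (0:ℝ) < 1 + y := by have := abs_le.1 hy_half; linarith
  -- main identity for thalerG
  have hs_eq : x^p + (1+x)^p - 1 = x^p * (1+y) := by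
    have expand : x^p * (1 + ((1+x)^p - 1) * x^(γ-1))
        = x^p + ((1+x)^p - 1) * (x^p * x^(γ-1)) := by ring
    rw [hy_def, expand, id2]; ring
  have hG : thalerG γ x = x * (1+y)^q := by
    show (x ^ (1-γ) + (1+x) ^ (1-γ) - 1) ^ (1/(1-γ)) = x * (1+y)^q
    rw [← hp_def, ← hq_def, hs_eq,
      Real.mul_rpow (Real.rpow_nonneg hx0.le _) h1y.le,
      ← Real.rpow_mul hx0.le, hpq, Real.rpow_one]
  have hxγ1 : x^(1+γ) = x * x^γ := by rw [Real.rpow_add hx0, Real.rpow_one]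
  have hqy : q * y = x^γ + q * R * x^(γ-1) := by
    rw [hy_eq, mul_add, ← mul_assoc, mul_comm q p, hpq, one_mul]; ring
  set A := (1+y)^q - 1 - q*y with hA_def
  have hA : |A| ≤ Kq * y^2 := by
    have := quad_aux q hy_half
    rw [← hKq] at this
    exact this
  have hdiff : thalerG γ x - x - x^(1+γ) = x * (A + q * R * x^(γ-1)) := by
    rw [hG, hxγ1, hA_def, hqy]; ring
  have hm1 : x^(γ+γ) ≤ x^(γ + min γ 1) :=
    Real.rpow_le_rpow_of_exponent_ge hx0 hx1 (by have := min_le_left γ 1; linarith)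
  have hm2 : x^(γ+1) ≤ x^(γ + min γ 1) :=
    Real.rpow_le_rpow_of_exponent_ge hx0 hx1 (by have := min_le_right γ 1; linarith)
  have hfin : x * x^(γ + min γ 1) = x^(1+γ+min γ 1) := by
    rw [show 1+γ+min γ 1 = 1+(γ+min γ 1) by ring, Real.rpow_add hx0 1 (γ + min γ 1), Real.rpow_one]
  have hx2γ : (x^γ)^2 = x^(γ+γ) := by rw [sq, ← Real.rpow_add hx0]
  have hy2 : y^2 ≤ E^2 * x^(γ+γ) := by
    have h1 := pow_le_pow_left₀ (abs_nonneg y) habs_y 2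
    rw [sq_abs] at h1
    calc y^2 ≤ (E * x^γ)^2 := h1
      _ = E^2 * (x^γ)^2 := by ring
      _ = E^2 * x^(γ+γ) := by rw [hx2γ]
  calc |thalerG γ x - x - x^(1+γ)| = x * |A + q*R*x^(γ-1)| := by
        rw [hdiff, abs_mul, abs_of_pos hx0]
    _ ≤ x * (Kq * y^2 + |q| * Kp * x^(γ+1)) := by
        apply mul_le_mul_of_nonneg_left _ hx0.le
        calc |A + q*R*x^(γ-1)| ≤ |A| + |q*R*x^(γ-1)| := abs_add_le _ _
          _ ≤ Kq * y^2 + |q| * Kp * x^(γ+1) := by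
              apply add_le_add hA
              rw [abs_mul, abs_mul, abs_of_nonneg (Real.rpow_nonneg hx0.le _)]
              calc |q| * |R| * x^(γ-1) ≤ |q| * (Kp * x^2) * x^(γ-1) := by
                    exact mul_le_mul_of_nonneg_right
                      (mul_le_mul_of_nonneg_left hR (abs_nonneg q))
                      (Real.rpow_nonneg hx0.le _)
                _ = |q| * Kp * (x^2 * x^(γ-1)) := by ring
                _ = |q| * Kp * x^(γ+1) := by rw [id3]
    _ ≤ x * (Kq * (E^2 * x^(γ+min γ 1)) + |q| * Kp * x^(γ+min γ 1)) := by
        apply mul_le_mul_of_nonneg_left _ hx0.le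
        apply add_le_add
        · calc Kq * y^2 ≤ Kq * (E^2*x^(γ+γ)) := mul_le_mul_of_nonneg_left hy2 hKq0
            _ ≤ Kq * (E^2*x^(γ+min γ 1)) := mul_le_mul_of_nonneg_left
                (mul_le_mul_of_nonneg_left hm1 (sq_nonneg E)) hKq0
        · exact mul_le_mul_of_nonneg_left hm2 (by positivity)
    _ = (Kq * E^2 + |q| * Kp) * (x * x^(γ+min γ 1)) := by ring
    _ = (Kq * E^2 + |q| * Kp) * x^(1+γ+min γ 1) := by rw [hfin]
    _ ≤ (Kq * E^2 + |q| * Kp + 1) * x^(1+γ+min γ 1) := by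
        apply mul_le_mul_of_nonneg_right _ (Real.rpow_nonneg hx0.le _)
        linarith
end
end

section
/- There exist constants C > 0 and δ > 0 such that for all x ∈ (0,δ), |x^{-γ} − g(x)^{-γ} − γ| ≤ C·x^{m}, where m = min(γ,1); in particular x^{-γ} − g(x)^{-γ} → γ as x → 0+. -/
open Real Set Filter Topology

noncomputable section

/-- Uniform bound `(1+t)^r ≤ 2^|r|` for `|t| ≤ 1/2`. -/
private lemma aux_rpow_bound (r t : ℝ) (ht : |t| ≤ 1/2) : (1 + t) ^ r ≤ 2 ^ |r| := by
  obtain ⟨ht1, ht2⟩ := abs_le.mp ht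
  have h1 : (1/2 : ℝ) ≤ 1 + t := by linarith
  have h2 : 1 + t ≤ 2 := by linarith
  rcases le_or_gt 0 r with hr | hr
  · rw [abs_of_nonneg hr]
    exact Real.rpow_le_rpow (by linarith) h2 hr
  · rw [abs_of_neg hr]
    have := Real.rpow_le_rpow_of_nonpos (by norm_num : (0:ℝ) < 1/2) h1 hr.le
    calc (1 + t) ^ r ≤ (1/2 : ℝ) ^ r := this
      _ = 2 ^ (-r) := by
          rw [one_div, ← Real.rpow_neg_one (2:ℝ), ← Real.rpow_mul (by norm_num)]
          ring_nf
  
/-- First-order bound: `|(1+t)^s - 1| ≤ K |t|` for `|t| ≤ 1/2`. -/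
private lemma aux_lin (s : ℝ) : ∃ K > 0, ∀ t : ℝ, |t| ≤ 1/2 → |(1 + t) ^ s - 1| ≤ K * |t| := by
  refine ⟨|s| * 2 ^ |s - 1| + 1, by positivity, fun t ht => ?_⟩
  set S : Set ℝ := Icc (-(1/2)) (1/2) with hS
  have hconv : Convex ℝ S := convex_Icc _ _
  have hpos : ∀ u ∈ S, (0:ℝ) < 1 + u := by
    rintro u ⟨h1, h2⟩; linarith
  have hderiv : ∀ u ∈ S, HasDerivWithinAt (fun v : ℝ => (1 + v) ^ s)
      (s * (1 + u) ^ (s - 1)) S u := by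
    intro u hu
    have h1 : HasDerivAt (fun v : ℝ => 1 + v) 1 u := by
      simpa using (hasDerivAt_id u).const_add (1:ℝ)
    have h2 := (Real.hasDerivAt_rpow_const (x := 1 + u) (p := s)
      (Or.inl (hpos u hu).ne')).comp u h1
    simpa [Function.comp_def] using h2.hasDerivWithinAt
  have hbound : ∀ u ∈ S, ‖s * (1 + u) ^ (s - 1)‖ ≤ |s| * 2 ^ |s - 1| := by
    intro u hu
    rw [norm_mul, Real.norm_eq_abs, Real.norm_eq_abs,
      abs_of_nonneg (Real.rpow_nonneg (hpos u hu).le _)]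
    have : |u| ≤ 1/2 := abs_le.mpr ⟨hu.1, hu.2⟩
    exact mul_le_mul_of_nonneg_left (aux_rpow_bound _ _ this) (abs_nonneg s)
  have ht' : t ∈ S := abs_le.mp ht |>.imp id id |> fun h => ⟨h.1, h.2⟩
  have h0 : (0:ℝ) ∈ S := by constructor <;> norm_num
  have := hconv.norm_image_sub_le_of_norm_hasDerivWithin_le hderiv hbound h0 ht'
  simp only [Real.norm_eq_abs, sub_zero, add_zero, Real.one_rpow] at this
  calc |(1 + t) ^ s - 1| ≤ |s| * 2 ^ |s - 1| * |t| := this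
    _ ≤ (|s| * 2 ^ |s - 1| + 1) * |t| := by nlinarith [abs_nonneg t]

/-- Second-order bound: `|(1+t)^s - 1 - s t| ≤ K t^2` for `|t| ≤ 1/2`. -/
private lemma aux_quad (s : ℝ) : ∃ K > 0, ∀ t : ℝ, |t| ≤ 1/2 →
    |(1 + t) ^ s - 1 - s * t| ≤ K * t ^ 2 := by
  obtain ⟨K₁, hK₁, hA⟩ := aux_lin (s - 1)
  refine ⟨|s| * K₁ + 1, by positivity, fun t ht => ?_⟩
  set S : Set ℝ := Icc (-|t|) |t| with hS
  have hSsub : ∀ u ∈ S, |u| ≤ 1/2 := by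
    rintro u ⟨h1, h2⟩
    exact le_trans (abs_le.mpr ⟨h1, h2⟩) ht
  have hpos : ∀ u ∈ S, (0:ℝ) < 1 + u := by
    intro u hu
    have := abs_le.mp (le_trans (hSsub u hu) (le_refl _))
    linarith [this.1]
  have hderiv : ∀ u ∈ S, HasDerivWithinAt (fun v : ℝ => (1 + v) ^ s - 1 - s * v)
      (s * ((1 + u) ^ (s - 1) - 1)) S u := by
    intro u hu
    have h1 : HasDerivAt (fun v : ℝ => 1 + v) 1 u := by
      simpa using (hasDerivAt_id u).const_add (1:ℝ)
    have h2 := (Real.hasDerivAt_rpow_const (x := 1 + u) (p := s)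
      (Or.inl (hpos u hu).ne')).comp u h1
    have h3 : HasDerivAt (fun v : ℝ => (1 + v) ^ s - 1 - s * v)
        (s * (1 + u) ^ (s - 1) * 1 - 0 - s) u := by
      exact ((h2.sub_const 1).sub ((hasDerivAt_id u).const_mul s)).congr_deriv (by ring)
    have h4 : s * (1 + u) ^ (s - 1) * 1 - 0 - s = s * ((1 + u) ^ (s - 1) - 1) := by ring
    rw [h4] at h3
    exact h3.hasDerivWithinAt
  have hbound : ∀ u ∈ S, ‖s * ((1 + u) ^ (s - 1) - 1)‖ ≤ |s| * (K₁ * |t|) := by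
    intro u hu
    rw [norm_mul, Real.norm_eq_abs, Real.norm_eq_abs]
    refine mul_le_mul_of_nonneg_left ?_ (abs_nonneg s)
    calc |(1 + u) ^ (s - 1) - 1| ≤ K₁ * |u| := hA u (hSsub u hu)
      _ ≤ K₁ * |t| := by
          refine mul_le_mul_of_nonneg_left ?_ hK₁.le
          exact abs_le.mpr ⟨hu.1, hu.2⟩
  have ht' : t ∈ S := ⟨neg_abs_le t, le_abs_self t⟩
  have h0 : (0:ℝ) ∈ S := ⟨neg_nonpos.mpr (abs_nonneg t), abs_nonneg t⟩
  have := (convex_Icc _ _).norm_image_sub_le_of_norm_hasDerivWithin_le hderiv hbound h0 ht'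
  simp only [Real.norm_eq_abs, sub_zero, add_zero, mul_zero, Real.one_rpow] at this
  calc |(1 + t) ^ s - 1 - s * t| = |(1 + t) ^ s - 1 - s * t - ((1:ℝ) - 1 - 0)| := by norm_num
    _ ≤ |s| * (K₁ * |t|) * |t| := by
        have h := this
        convert h using 2 <;> norm_num
    _ = |s| * K₁ * t ^ 2 := by rw [← sq_abs t]; ring
    _ ≤ (|s| * K₁ + 1) * t ^ 2 := by nlinarith [sq_nonneg t]

set_option maxHeartbeats 1000000 in
/-- There exist constants `C > 0` and `δ > 0` such that for all `x ∈ (0,δ)`,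
`|x^(-γ) − g(x)^(-γ) − γ| ≤ C·x^m` where `m = min(γ,1)`; in particular
`x^(-γ) − g(x)^(-γ) → γ` as `x → 0+`. -/
theorem thalerG_rpow_increment (γ : ℝ)
    (hγ : γ ∈ Set.Ioo (0 : ℝ) 1 ∪ Set.Ioi (1 : ℝ)) :
    (∃ C > (0 : ℝ), ∃ δ > (0 : ℝ), ∀ x ∈ Set.Ioo (0 : ℝ) δ,
      |x ^ (-γ) - thalerG γ x ^ (-γ) - γ| ≤ C * x ^ min γ 1) ∧
    Tendsto (fun x => x ^ (-γ) - thalerG γ x ^ (-γ))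
      (nhdsWithin 0 (Set.Ioi (0 : ℝ))) (nhds γ) := by
  obtain ⟨hγ0, hγne⟩ : 0 < γ ∧ γ ≠ 1 := by
    rcases hγ with ⟨h1, h2⟩ | h
    · exact ⟨h1, ne_of_lt h2⟩
    · exact ⟨lt_trans one_pos h, ne_of_gt h⟩
  set s : ℝ := 1 - γ with hs_def
  have hs : s ≠ 0 := sub_ne_zero.mpr (Ne.symm hγne)
  set p : ℝ := -γ / s with hp_def
  have hps : p * s = -γ := div_mul_cancel₀ _ hs
  obtain ⟨K₁, hK₁, hlin⟩ := aux_lin s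
  obtain ⟨K₂, hK₂, hquad_p⟩ := aux_quad p
  obtain ⟨K₃, hK₃, hquad_s⟩ := aux_quad s
  set C : ℝ := |p| * K₃ + K₂ * K₁ ^ 2 + 1 with hC_def
  have hC : 0 < C := by positivity
  set δ : ℝ := min (1/2) ((1 / (2 * K₁)) ^ (1/γ)) with hδ_def
  have hδ : 0 < δ := lt_min (by norm_num) (Real.rpow_pos_of_pos (by positivity) _)
  have key : ∀ x ∈ Set.Ioo (0 : ℝ) δ,
      |x ^ (-γ) - thalerG γ x ^ (-γ) - γ| ≤ C * x ^ min γ 1 := by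
    rintro x ⟨hx, hxδ⟩
    have hxhalf : x < 1/2 := lt_of_lt_of_le hxδ (min_le_left _ _)
    have hx1 : x < 1 := by linarith
    have hxabs : |x| ≤ 1/2 := by rw [abs_of_pos hx]; linarith
    have hxγ : K₁ * x ^ γ ≤ 1/2 := by
      have h1 : x < (1 / (2 * K₁)) ^ (1/γ) := lt_of_lt_of_le hxδ (min_le_right _ _)
      have h2 : x ^ γ < ((1 / (2 * K₁)) ^ (1/γ)) ^ γ :=
        Real.rpow_lt_rpow hx.le h1 hγ0
      rw [one_div γ, Real.rpow_inv_rpow (by positivity) (ne_of_gt hγ0)] at h2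
      calc K₁ * x ^ γ ≤ K₁ * (1 / (2 * K₁)) := mul_le_mul_of_nonneg_left h2.le hK₁.le
        _ = 1/2 := by field_simp
    have hxs : (0:ℝ) < x ^ s := Real.rpow_pos_of_pos hx s
    set u : ℝ := ((1 + x) ^ s - 1) / x ^ s with hu_def
    have hu1 : |u| ≤ K₁ * x ^ γ := by
      rw [hu_def, abs_div, abs_of_pos hxs, div_le_iff₀ hxs]
      calc |(1 + x) ^ s - 1| ≤ K₁ * |x| := hlin x hxabs
        _ = K₁ * x := by rw [abs_of_pos hx]
        _ = K₁ * x ^ γ * x ^ s := by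
            rw [mul_assoc, ← Real.rpow_add hx]
            norm_num [hs_def]
    have hu : |u| ≤ 1/2 := hu1.trans hxγ
    have h1u : (0:ℝ) < 1 + u := by
      have := abs_le.mp hu; linarith [this.1]
    have hxsu : x ^ s * u = (1 + x) ^ s - 1 := by
      rw [hu_def, mul_div_cancel₀ _ (ne_of_gt hxs)]
    have hA : x ^ s + (1 + x) ^ s - 1 = x ^ s * (1 + u) := by
      rw [mul_add, mul_one, hxsu]; ring
    have hg : thalerG γ x ^ (-γ) = x ^ (-γ) * (1 + u) ^ p := by
      simp only [thalerG]
      rw [← hs_def, hA, ← Real.rpow_mul (mul_pos hxs h1u).le,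
        show 1 / s * (-γ) = p by rw [hp_def]; ring,
        Real.mul_rpow hxs.le h1u.le, ← Real.rpow_mul hx.le,
        show s * p = -γ by rw [mul_comm]; exact hps]
    set R : ℝ := (1 + x) ^ s - 1 - s * x with hR_def
    set E : ℝ := (1 + u) ^ p - 1 - p * u with hE_def
    have hR : |R| ≤ K₃ * x ^ 2 := hquad_s x hxabs
    have hE : |E| ≤ K₂ * u ^ 2 := hquad_p u hu
    have hxg : x ^ (-γ) = x ^ s / x := by
      rw [show -γ = s - 1 by rw [hs_def]; ring, Real.rpow_sub hx, Real.rpow_one]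
    have hup : (1 + u) ^ p = 1 + p * u + E := by rw [hE_def]; ring
    have h2 : x ^ s / x * u = s + R / x := by
      rw [div_mul_eq_mul_div, hxsu, hR_def]
      field_simp
      ring
    have hid : x ^ (-γ) - x ^ (-γ) * (1 + u) ^ p - γ = -(p * R / x) - x ^ (-γ) * E := by
      rw [hup, hxg]
      linear_combination (-p) * h2 - hps
    -- bounding
    have hxm1 : x ≤ x ^ min γ 1 := by
      calc x = x ^ (1:ℝ) := (Real.rpow_one x).symm
        _ ≤ x ^ min γ 1 := Real.rpow_le_rpow_of_exponent_ge hx hx1.le (min_le_right γ 1)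
    have hxm2 : x ^ γ ≤ x ^ min γ 1 :=
      Real.rpow_le_rpow_of_exponent_ge hx hx1.le (min_le_left γ 1)
    have hb1 : |p * R / x| ≤ |p| * K₃ * x := by
      rw [abs_div, abs_mul, abs_of_pos hx, div_le_iff₀ hx]
      calc |p| * |R| ≤ |p| * (K₃ * x ^ 2) := mul_le_mul_of_nonneg_left hR (abs_nonneg p)
        _ = |p| * K₃ * x * x := by ring
    have hnegγ : (0:ℝ) < x ^ (-γ) := Real.rpow_pos_of_pos hx _
    have hu2 : u ^ 2 ≤ (K₁ * x ^ γ) ^ 2 := by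
      rw [← sq_abs u]
      exact pow_le_pow_left₀ (abs_nonneg u) hu1 2
    have hxpow : x ^ (-γ) * (x ^ γ) ^ 2 = x ^ γ := by
      rw [sq, ← mul_assoc, ← Real.rpow_add hx, ← Real.rpow_add hx]
      norm_num
    have hb2 : |x ^ (-γ) * E| ≤ K₂ * K₁ ^ 2 * x ^ γ := by
      rw [abs_mul, abs_of_pos hnegγ]
      calc x ^ (-γ) * |E| ≤ x ^ (-γ) * (K₂ * (K₁ * x ^ γ) ^ 2) := by
            refine mul_le_mul_of_nonneg_left (hE.trans ?_) hnegγ.le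
            exact mul_le_mul_of_nonneg_left hu2 hK₂.le
        _ = K₂ * K₁ ^ 2 * (x ^ (-γ) * (x ^ γ) ^ 2) := by ring
        _ = K₂ * K₁ ^ 2 * x ^ γ := by rw [hxpow]
    rw [hg, hid]
    calc |-(p * R / x) - x ^ (-γ) * E| ≤ |p * R / x| + |x ^ (-γ) * E| := by
          rw [← abs_neg (p * R / x)] at *
          exact abs_sub (-(p * R / x)) (x ^ (-γ) * E)
      _ ≤ |p| * K₃ * x + K₂ * K₁ ^ 2 * x ^ γ := add_le_add hb1 hb2
      _ ≤ |p| * K₃ * x ^ min γ 1 + K₂ * K₁ ^ 2 * x ^ min γ 1 := by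
          gcongr
      _ ≤ C * x ^ min γ 1 := by
          rw [hC_def]
          have h0 : (0:ℝ) ≤ x ^ min γ 1 := Real.rpow_nonneg hx.le _
          have h2 : (|p| * K₃ + K₂ * K₁ ^ 2) * x ^ min γ 1 ≤
              (|p| * K₃ + K₂ * K₁ ^ 2 + 1) * x ^ min γ 1 := by
            apply mul_le_mul_of_nonneg_right _ h0
            linarith
          linarith [h2]
  constructor
  · exact ⟨C, hC, δ, hδ, key⟩
  · have hm : (0:ℝ) < min γ 1 := lt_min hγ0 one_pos
    have h1 : Tendsto (fun x : ℝ => C * x ^ min γ 1) (𝓝[>] (0:ℝ)) (𝓝 0) := by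
      have hc : ContinuousWithinAt (fun x : ℝ => x ^ min γ 1) (Set.Ioi 0) 0 :=
        (Real.continuousAt_rpow_const 0 (min γ 1) (Or.inr hm.le)).continuousWithinAt
      have := hc.tendsto.const_mul C
      simpa [Real.zero_rpow hm.ne'] using this
    have h2 : ∀ᶠ x in 𝓝[>] (0:ℝ),
        ‖x ^ (-γ) - thalerG γ x ^ (-γ) - γ‖ ≤ C * x ^ min γ 1 := by
      filter_upwards [Ioo_mem_nhdsGT_of_mem (Set.left_mem_Ico.mpr hδ)] with x hx
      simpa [Real.norm_eq_abs] using key x hx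
    have h3 := squeeze_zero_norm' h2 h1
    have h4 := h3.add_const γ
    simpa using h4
end
end

section
/- Let (x_n)_{n≥1} be the sequence in (0,x*] determined by x_1 = x* and g(x_{n+1}) = x_n for all n ≥ 1 (this sequence exists, is unique and is strictly decreasing, since g maps (0,x*] bijectively and increasingly onto (0,1]). Then n^α·x_n → α^α as n → ∞, where α = 1/γ; i.e. x_n ∼ (γn)^{-1/γ}. -/
open Real Set Filter Topology

noncomputable section

lemma thaler_inner_pos {γ : ℝ} (hγ1 : γ ≠ 1) {x : ℝ} (hx : x ∈ Set.Ioo (0:ℝ) 1) :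
    0 < x ^ (1 - γ) + (1 + x) ^ (1 - γ) - 1 := by
  rcases lt_or_gt_of_ne hγ1 with h | h
  · have hs : 0 < 1 - γ := by linarith
    have h1 : (1:ℝ) ≤ (1 + x) ^ (1 - γ) := by
      calc (1:ℝ) = 1 ^ (1-γ) := (Real.one_rpow _).symm
      _ ≤ (1+x)^(1-γ) := Real.rpow_le_rpow zero_le_one (by linarith [hx.1]) hs.le
    have h2 : 0 < x ^ (1 - γ) := Real.rpow_pos_of_pos hx.1 _
    linarith
  · have hs : 1 - γ < 0 := by linarith
    have h1 : (1:ℝ) < x ^ (1 - γ) := by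
      rw [Real.one_lt_rpow_iff_of_pos hx.1]; right; exact ⟨hx.2, hs⟩
    have h2 : 0 < (1 + x) ^ (1 - γ) := Real.rpow_pos_of_pos (by linarith [hx.1]) _
    linarith

lemma thaler_lt_g {γ : ℝ} (hγ1 : γ ≠ 1) {x : ℝ} (hx : x ∈ Set.Ioo (0:ℝ) 1) :
    x < thalerG γ x := by
  have hs0 : (1:ℝ) - γ ≠ 0 := sub_ne_zero.mpr (Ne.symm hγ1)
  have hin := thaler_inner_pos hγ1 hx
  have hxpow : (x ^ (1-γ)) ^ (1/(1-γ)) = x := by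
    rw [← Real.rpow_mul hx.1.le, mul_one_div, div_self hs0, Real.rpow_one]
  rcases lt_or_gt_of_ne hγ1 with h | h
  · have hs : 0 < 1 - γ := by linarith
    have h1 : (1:ℝ) < (1 + x) ^ (1 - γ) := by
      rw [Real.one_lt_rpow_iff_of_pos (by linarith [hx.1])]
      left; exact ⟨by linarith [hx.1], hs⟩
    have hlt : x ^ (1-γ) < x ^ (1-γ) + (1+x)^(1-γ) - 1 := by linarith
    calc x = (x ^ (1-γ)) ^ (1/(1-γ)) := hxpow.symm
    _ < _ := Real.rpow_lt_rpow (Real.rpow_nonneg hx.1.le _) hlt (by positivity)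
  · have hs : 1 - γ < 0 := by linarith
    have h1 : (1 + x) ^ (1 - γ) < 1 :=
      Real.rpow_lt_one_of_one_lt_of_neg (by linarith [hx.1]) hs
    have hlt : x ^ (1-γ) + (1+x)^(1-γ) - 1 < x ^ (1-γ) := by linarith
    have hinv : 1/(1-γ) < 0 := by
      apply div_neg_of_pos_of_neg one_pos hs
    calc x = (x ^ (1-γ)) ^ (1/(1-γ)) := hxpow.symm
    _ < _ := Real.rpow_lt_rpow_of_neg hin hlt hinv

lemma thaler_key_s9 {γ : ℝ} (hγ0 : 0 < γ) (hγ1 : γ ≠ 1) :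
    Tendsto (fun x : ℝ => x ^ (-γ) - thalerG γ x ^ (-γ)) (𝓝[>] (0:ℝ)) (𝓝 γ) := by
  have hs0 : (1:ℝ) - γ ≠ 0 := sub_ne_zero.mpr (Ne.symm hγ1)
  set s : ℝ := 1 - γ with hsdef
  set c : ℝ := -γ / s with hcdef
  set ψ : ℝ → ℝ := fun x => ((1+x)^s - 1)/x with hψdef
  set φ : ℝ → ℝ := fun x => ((1+x)^s - 1)/x^s with hφdef
  set F : ℝ → ℝ := fun t => ((1+t)^c - 1)/t with hFdef
  -- slope limits
  have slope_lim : ∀ p : ℝ, Tendsto (fun t : ℝ => ((1+t)^p - 1)/t) (𝓝[≠] (0:ℝ)) (𝓝 p) := by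
    intro p
    have hd : HasDerivAt (fun t : ℝ => (1+t)^p) p 0 := by
      have h1 : HasDerivAt (fun t : ℝ => 1 + t) 1 0 := by
        simpa using (hasDerivAt_id (0:ℝ)).const_add 1
      have h2 := h1.rpow_const (p := p) (Or.inl (by norm_num))
      simpa using h2
    have h3 := hasDerivAt_iff_tendsto_slope.mp hd
    refine Tendsto.congr (fun t => ?_) h3
    simp [slope_def_field]
  have hψlim : Tendsto ψ (𝓝[>] (0:ℝ)) (𝓝 s) :=
    (slope_lim s).mono_left (nhdsWithin_mono _ (fun t ht => ne_of_gt ht))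
  have hφne : ∀ x : ℝ, 0 < x → φ x ≠ 0 := by
    intro x hx
    have hb : (1:ℝ) < 1 + x := by linarith
    have hnum : (1+x)^s - 1 ≠ 0 := by
      rcases hs0.lt_or_gt with h | h
      · exact ne_of_lt (by simpa [sub_neg] using Real.rpow_lt_one_of_one_lt_of_neg hb h)
      · refine ne_of_gt ?_
        rw [sub_pos, Real.one_lt_rpow_iff_of_pos (by linarith)]
        left; exact ⟨hb, h⟩
    exact div_ne_zero hnum (Real.rpow_pos_of_pos hx s).ne'
  have hφ0 : Tendsto φ (𝓝[>] (0:ℝ)) (𝓝 0) := by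
    have h2 : Tendsto (fun x : ℝ => x ^ γ) (𝓝[>] (0:ℝ)) (𝓝 0) := by
      have h3 := (Real.continuousAt_rpow_const 0 γ (Or.inr hγ0.le)).tendsto
      rw [Real.zero_rpow hγ0.ne'] at h3
      exact h3.mono_left nhdsWithin_le_nhds
    have h4 := hψlim.mul h2
    rw [mul_zero] at h4
    refine h4.congr' ?_
    filter_upwards [self_mem_nhdsWithin] with x hx
    have hx0 : (0:ℝ) < x := hx
    have key : x ^ γ * x ^ s = x := by
      rw [← Real.rpow_add hx0]
      norm_num [hsdef]
    show ψ x * x ^ γ = φ x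
    simp only [hψdef, hφdef]
    rw [div_mul_eq_mul_div, div_eq_div_iff hx0.ne' (Real.rpow_pos_of_pos hx0 s).ne',
      mul_assoc, key]
  have hFφ : Tendsto (fun x => F (φ x)) (𝓝[>] (0:ℝ)) (𝓝 c) := by
    refine (slope_lim c).comp ?_
    refine tendsto_nhdsWithin_of_tendsto_nhds_of_eventually_within _ hφ0 ?_
    filter_upwards [self_mem_nhdsWithin] with x hx
    exact hφne x hx
  have hmul : Tendsto (fun x => -(ψ x * F (φ x))) (𝓝[>] (0:ℝ)) (𝓝 γ) := by
    have h5 := (hψlim.mul hFφ).neg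
    have hsc : -(s * c) = γ := by
      rw [hcdef]; field_simp
    rwa [hsc] at h5
  refine hmul.congr' ?_
  filter_upwards [Ioo_mem_nhdsGT_of_mem (Set.left_mem_Ico.mpr one_pos)] with x hx
  have hx0 : (0:ℝ) < x := hx.1
  have hin := thaler_inner_pos hγ1 hx
  rw [← hsdef] at hin
  have hxs_pos : 0 < x ^ s := Real.rpow_pos_of_pos hx0 s
  have hfac : x ^ s + (1+x)^s - 1 = x ^ s * (1 + φ x) := by
    simp only [hφdef]
    field_simp
    ring
  have h1φ : 0 < 1 + φ x := by
    rw [hfac] at hin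
    nlinarith [hxs_pos]
  have hxsc : (x ^ s) ^ c = x ^ (-γ) := by
    rw [← Real.rpow_mul hx0.le]
    congr 1
    rw [hcdef]; field_simp
  have hgpow : thalerG γ x ^ (-γ) = x ^ (-γ) * (1 + φ x) ^ c := by
    unfold thalerG
    rw [← hsdef, ← Real.rpow_mul hin.le,
      show 1/s * (-γ) = c by rw [hcdef]; field_simp,
      hfac, Real.mul_rpow hxs_pos.le h1φ.le, hxsc]
  have hψφ : x ^ (-γ) * φ x = ψ x := by
    simp only [hψdef, hφdef]
    have e1 : x ^ (-γ) * x = x ^ s := by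
      calc x ^ (-γ) * x = x ^ (-γ) * x ^ (1:ℝ) := by rw [Real.rpow_one]
      _ = x ^ (-γ + 1) := (Real.rpow_add hx0 _ _).symm
      _ = x ^ s := by rw [hsdef]; ring_nf
    rw [mul_div_assoc', div_eq_div_iff hxs_pos.ne' hx0.ne']
    linear_combination ((1+x)^s - 1) * e1
  have hφx := hφne x hx0
  show -(ψ x * F (φ x)) = x ^ (-γ) - thalerG γ x ^ (-γ)
  rw [hgpow, ← hψφ]
  simp only [hFdef]
  field_simp
  ring

/-- Let `(x_n)_{n≥1}` be the sequence in `(0,x*]` determined by `x_1 = x*`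
and `g(x_{n+1}) = x_n`.  Then `n^α · x_n → α^α` as `n → ∞`, where `α = 1/γ`;
i.e. `x_n ∼ (γ n)^(-1/γ)`. -/
theorem thaler_preimage_sequence_asymptotics (γ : ℝ)
    (hγ : γ ∈ Set.Ioo (0 : ℝ) 1 ∪ Set.Ioi (1 : ℝ))
    (xs : ℝ) (hxs : xs ∈ Set.Ioo (0 : ℝ) 1)
    (hxseq : xs ^ (1 - γ) + (1 + xs) ^ (1 - γ) = 2)
    (x : ℕ → ℝ)
    (hx1 : x 1 = xs)
    (hxmem : ∀ n ≥ 1, x n ∈ Set.Ioc (0 : ℝ) xs)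
    (hxrec : ∀ n ≥ 1, thalerG γ (x (n + 1)) = x n) :
    Tendsto (fun n : ℕ => (n : ℝ) ^ (1 / γ) * x n) atTop (nhds ((1 / γ) ^ (1 / γ))) := by
  obtain ⟨hγ0, hγ1⟩ : 0 < γ ∧ γ ≠ 1 := by
    rcases hγ with h | h
    exacts [⟨h.1, ne_of_lt h.2⟩, ⟨lt_trans one_pos h, ne_of_gt h⟩]
  set y : ℕ → ℝ := fun n => x (n + 1) with hydef
  have hymem : ∀ n, y n ∈ Set.Ioc (0:ℝ) xs := fun n => hxmem (n+1) (Nat.le_add_left 1 n)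
  have hyIoo : ∀ n, y n ∈ Set.Ioo (0:ℝ) 1 := fun n =>
    ⟨(hymem n).1, lt_of_le_of_lt (hymem n).2 hxs.2⟩
  have hyrec : ∀ n, thalerG γ (y (n+1)) = y n := fun n => hxrec (n+1) (Nat.le_add_left 1 n)
  have hylt : ∀ n, y (n+1) < y n := fun n => by
    rw [← hyrec n]; exact thaler_lt_g hγ1 (hyIoo (n+1))
  have hyanti : Antitone y := antitone_nat_of_succ_le (fun n => (hylt n).le)
  have hbdd : BddBelow (Set.range y) := ⟨0, fun v ⟨n, hn⟩ => hn ▸ (hymem n).1.le⟩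
  have hytend : Tendsto y atTop (𝓝 (⨅ n, y n)) := tendsto_atTop_ciInf hyanti hbdd
  set L := ⨅ n, y n with hLdef
  have hL0 : 0 ≤ L := le_ciInf (fun n => (hymem n).1.le)
  have hLzero : L = 0 := by
    by_contra hne
    have hLpos : 0 < L := lt_of_le_of_ne hL0 (Ne.symm hne)
    have hLlt1 : L < 1 := lt_of_le_of_lt (ciInf_le hbdd 0) (hyIoo 0).2
    have hinL : 0 < L^(1-γ) + (1+L)^(1-γ) - 1 := thaler_inner_pos hγ1 ⟨hLpos, hLlt1⟩
    have hcont : ContinuousAt (thalerG γ) L := by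
      have h1 : ContinuousAt (fun t : ℝ => t ^ (1-γ) + (1+t)^(1-γ) - 1) L := by
        refine ContinuousAt.sub (ContinuousAt.add ?_ ?_) continuousAt_const
        · exact continuousAt_id.rpow_const (Or.inl hLpos.ne')
        · exact (continuousAt_const.add continuousAt_id).rpow_const
            (Or.inl (by positivity : (0:ℝ) < 1 + L).ne')
      exact h1.rpow_const (Or.inl hinL.ne')
    have hgL : thalerG γ L = L := by
      have h1 : Tendsto (fun n => thalerG γ (y (n+1))) atTop (𝓝 (thalerG γ L)) :=
        hcont.tendsto.comp ((tendsto_add_atTop_iff_nat 1).mpr hytend)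
      have h2 : Tendsto (fun n => thalerG γ (y (n+1))) atTop (𝓝 L) := by
        refine hytend.congr (fun n => ?_)
        rw [hyrec n]
      exact tendsto_nhds_unique h1 h2
    exact (thaler_lt_g hγ1 ⟨hLpos, hLlt1⟩).ne' hgL
  rw [hLzero] at hytend
  have hy0 : Tendsto y atTop (𝓝[>] (0:ℝ)) :=
    tendsto_nhdsWithin_of_tendsto_nhds_of_eventually_within _ hytend
      (Eventually.of_forall (fun n => (hymem n).1))
  set u : ℕ → ℝ := fun n => y n ^ (-γ) with hudef
  have hdiff : Tendsto (fun n => u (n+1) - u n) atTop (𝓝 γ) := by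
    have hcomp := (thaler_key_s9 hγ0 hγ1).comp ((tendsto_add_atTop_iff_nat 1).mpr hy0)
    refine hcomp.congr (fun n => ?_)
    simp only [Function.comp, hudef]
    rw [hyrec n]
  have humain : Tendsto (fun n : ℕ => u n / n) atTop (𝓝 γ) := by
    have h1 : Tendsto (fun n : ℕ => (u n - u 0) / n) atTop (𝓝 γ) := by
      refine hdiff.cesaro.congr (fun n => ?_)
      rw [Finset.sum_range_sub u n, inv_mul_eq_div]
    have h2 : Tendsto (fun n : ℕ => u 0 / n) atTop (𝓝 0) :=
      tendsto_const_div_atTop_nhds_zero_nat _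
    have h3 := h1.add h2
    rw [add_zero] at h3
    refine h3.congr (fun n => ?_)
    rw [← add_div, sub_add_cancel]
  have hquot : Tendsto (fun n : ℕ => (n:ℝ)/((n:ℝ)+1)) atTop (𝓝 1) := by
    have h1 := (tendsto_const_nhds (α := ℕ) (f := atTop) (x := (1:ℝ))).sub
      tendsto_one_div_add_atTop_nhds_zero_nat
    rw [sub_zero] at h1
    refine h1.congr (fun n => ?_)
    have hn : ((n:ℝ)+1) ≠ 0 := by positivity
    field_simp
    ring
  have hvshift : Tendsto (fun n : ℕ => x (n+1) ^ (-γ) / ((n:ℝ)+1)) atTop (𝓝 γ) := by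
    have h1 := humain.mul hquot
    rw [mul_one] at h1
    refine h1.congr' ?_
    filter_upwards [eventually_ge_atTop 1] with n hn
    have hn0 : ((n:ℝ)) ≠ 0 := Nat.cast_ne_zero.mpr (by omega)
    have hn1 : ((n:ℝ)+1) ≠ 0 := by positivity
    show u n / n * ((n:ℝ)/((n:ℝ)+1)) = x (n+1) ^ (-γ) / ((n:ℝ)+1)
    rw [hudef]
    field_simp
    rfl
  have hv : Tendsto (fun n : ℕ => x n ^ (-γ) / (n:ℝ)) atTop (𝓝 γ) := by
    refine (tendsto_add_atTop_iff_nat 1).mp ?_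
    refine hvshift.congr (fun n => ?_)
    simp only [Nat.cast_add, Nat.cast_one]
  have hfinal := hv.rpow_const (p := -(1/γ)) (Or.inl hγ0.ne')
  have hpow : γ ^ (-(1/γ)) = (1/γ)^(1/γ) := by
    rw [one_div, Real.inv_rpow hγ0.le, ← Real.rpow_neg hγ0.le]
  rw [hpow] at hfinal
  refine hfinal.congr' ?_
  filter_upwards [eventually_ge_atTop 1] with n hn
  have hxn0 : 0 < x n := (hxmem n hn).1
  have hn0 : (0:ℝ) < (n:ℝ) := Nat.cast_pos.mpr (by omega)
  have e1 : (x n ^ (-γ)) ^ (-(1/γ)) = x n := by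
    rw [← Real.rpow_mul hxn0.le, show -γ * -(1/γ) = 1 by field_simp, Real.rpow_one]
  have e2 : ((n:ℝ)⁻¹) ^ (-(1/γ)) = (n:ℝ)^(1/γ) := by
    rw [← Real.rpow_neg_one (n:ℝ), ← Real.rpow_mul hn0.le,
      show (-1:ℝ) * -(1/γ) = 1/γ by ring]
  show (x n ^ (-γ) / (n:ℝ)) ^ (-(1/γ)) = (n:ℝ)^(1/γ) * x n
  rw [div_eq_mul_inv, Real.mul_rpow (Real.rpow_nonneg hxn0.le _) (inv_nonneg.mpr hn0.le),
    e1, e2, mul_comm]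
end
end

section
/- The function g is differentiable at every x ∈ (0,1) with derivative g'(x) = (x^{1-γ} + (1+x)^{1-γ} − 1)^{γ/(1-γ)}·(x^{-γ} + (1+x)^{-γ}); in particular g'(x*) = h(x*) = (x*)^{-γ} + (1+x*)^{-γ}, i.e. the derivative of the Thaler map at the branch point equals the value of the invariant density there. -/
open Real Set

noncomputable section

/-- `g` is differentiable at every `x ∈ (0,1)` with derivative
`g'(x) = (x^(1-γ) + (1+x)^(1-γ) − 1)^(γ/(1-γ)) · (x^(-γ) + (1+x)^(-γ))`; in particular
`g'(x*) = h(x*) = (x*)^(-γ) + (1+x*)^(-γ)`, i.e. the derivative of the Thaler map at the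
branch point equals the value of the invariant density there. -/
theorem thalerG_derivative (γ : ℝ)
    (hγ : γ ∈ Set.Ioo (0 : ℝ) 1 ∪ Set.Ioi (1 : ℝ))
    (xs : ℝ) (hxs : xs ∈ Set.Ioo (0 : ℝ) 1)
    (hxseq : xs ^ (1 - γ) + (1 + xs) ^ (1 - γ) = 2) :
    (∀ x ∈ Set.Ioo (0 : ℝ) 1,
      HasDerivAt (thalerG γ)
        ((x ^ (1 - γ) + (1 + x) ^ (1 - γ) - 1) ^ (γ / (1 - γ)) *
          (x ^ (-γ) + (1 + x) ^ (-γ))) x) ∧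
    HasDerivAt (thalerG γ) (xs ^ (-γ) + (1 + xs) ^ (-γ)) xs := by
  have hγ1 : (1 : ℝ) - γ ≠ 0 := by
    rcases hγ with h | h
    · exact sub_ne_zero.2 (ne_of_gt h.2)
    · exact sub_ne_zero.2 (ne_of_lt (mem_Ioi.mp h))
  have main : ∀ x ∈ Set.Ioo (0 : ℝ) 1,
      HasDerivAt (thalerG γ)
        ((x ^ (1 - γ) + (1 + x) ^ (1 - γ) - 1) ^ (γ / (1 - γ)) *
          (x ^ (-γ) + (1 + x) ^ (-γ))) x := by
    intro x hx
    obtain ⟨hx0, hx1⟩ := hx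
    have h1x : (0 : ℝ) < 1 + x := by linarith
    -- positivity of the inner expression
    have hupos : 0 < x ^ (1 - γ) + (1 + x) ^ (1 - γ) - 1 := by
      rcases hγ with h | h
      · have h1 : (1 : ℝ) < (1 + x) ^ (1 - γ) :=
          Real.one_lt_rpow_iff_of_pos h1x |>.2 (Or.inl ⟨by linarith, by linarith [h.2]⟩)
        have h2 : 0 < x ^ (1 - γ) := Real.rpow_pos_of_pos hx0 _
        linarith
      · have h1 : (1 : ℝ) < x ^ (1 - γ) :=
          Real.one_lt_rpow_iff_of_pos hx0 |>.2 (Or.inr ⟨hx1, by linarith [mem_Ioi.mp h]⟩)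
        have h2 : 0 < (1 + x) ^ (1 - γ) := Real.rpow_pos_of_pos h1x _
        linarith
    -- derivative of inner function
    have hd1 : HasDerivAt (fun y : ℝ => y ^ (1 - γ)) ((1 - γ) * x ^ (-γ)) x := by
      have := Real.hasDerivAt_rpow_const (x := x) (p := 1 - γ) (Or.inl hx0.ne')
      convert this using 2
      ring_nf
    have hd2 : HasDerivAt (fun y : ℝ => (1 + y) ^ (1 - γ)) ((1 - γ) * (1 + x) ^ (-γ)) x := by
      have h0 : HasDerivAt (fun y : ℝ => 1 + y) 1 x := (hasDerivAt_id x).const_add 1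
      have := (Real.hasDerivAt_rpow_const (x := 1 + x) (p := 1 - γ) (Or.inl h1x.ne')).comp x h0
      refine HasDerivAt.congr_deriv this ?_
      ring_nf
    have hdu : HasDerivAt (fun y : ℝ => y ^ (1 - γ) + (1 + y) ^ (1 - γ) - 1)
        ((1 - γ) * (x ^ (-γ) + (1 + x) ^ (-γ))) x := by
      have := (hd1.add hd2).sub_const 1
      refine HasDerivAt.congr_deriv this ?_
      ring
    have hdg := (Real.hasDerivAt_rpow_const
        (x := x ^ (1 - γ) + (1 + x) ^ (1 - γ) - 1) (p := 1 / (1 - γ))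
        (Or.inl hupos.ne')).comp x hdu
    have key : 1 / (1 - γ) * (x ^ (1 - γ) + (1 + x) ^ (1 - γ) - 1) ^ (1 / (1 - γ) - 1) *
        ((1 - γ) * (x ^ (-γ) + (1 + x) ^ (-γ)))
        = (x ^ (1 - γ) + (1 + x) ^ (1 - γ) - 1) ^ (γ / (1 - γ)) *
          (x ^ (-γ) + (1 + x) ^ (-γ)) := by
      have hexp : 1 / (1 - γ) - 1 = γ / (1 - γ) := by
        field_simp
        ring
      rw [hexp]
      field_simp
    rw [← key]
    exact hdg
  refine ⟨main, ?_⟩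
  have h := main xs hxs
  have hu : xs ^ (1 - γ) + (1 + xs) ^ (1 - γ) - 1 = 1 := by linarith
  rw [hu, Real.one_rpow, one_mul] at h
  exact h
end
end

section
/- Let (x_n)_{n≥1} be the sequence in (0,x*] with x_1 = x* and g(x_{n+1}) = x_n for all n ≥ 1, and for each n ≥ 1 let y_n be the unique point of (x*,1] with g(y_n) = 1 + x_n (it exists since g maps (x*,1] bijectively and increasingly onto (1,2]). Then n^α·(y_n − x*) → α^α/h(x*) as n → ∞, where α = 1/γ. -/
open Real Set Filter Topology

noncomputable section

lemma thalerA_pos {γ : ℝ} (hγ0 : 0 < γ) {t : ℝ} (ht : 0 < t) (ht1 : t ≤ 1) :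
    0 < t ^ (1 - γ) + (1 + t) ^ (1 - γ) - 1 := by
  rcases le_or_gt γ 1 with h | h
  · have h1 : (1 : ℝ) ≤ (1 + t) ^ (1 - γ) := Real.one_le_rpow (by linarith) (by linarith)
    have h2 := Real.rpow_pos_of_pos ht (1 - γ)
    linarith
  · have h1 : (1 : ℝ) ≤ t ^ (1 - γ) :=
      Real.one_le_rpow_of_pos_of_le_one_of_nonpos ht ht1 (by linarith)
    have h2 := Real.rpow_pos_of_pos (show (0:ℝ) < 1 + t by linarith) (1 - γ)
    linarith

lemma lt_thalerG {γ : ℝ} (hγ0 : 0 < γ) (hγ1 : γ ≠ 1) {t : ℝ} (ht : 0 < t) (ht1 : t ≤ 1) :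
    t < thalerG γ t := by
  have hA := thalerA_pos hγ0 ht ht1
  have hβ : (1 : ℝ) - γ ≠ 0 := sub_ne_zero.mpr fun h => hγ1 h.symm
  have hkey : t = (t ^ (1 - γ)) ^ (1 / (1 - γ)) := by
    rw [← Real.rpow_mul ht.le, mul_one_div, div_self hβ, Real.rpow_one]
  rcases lt_or_gt_of_ne hβ with hβneg | hβpos
  · -- 1 - γ < 0
    have h1 : (1 + t) ^ (1 - γ) < 1 :=
      Real.rpow_lt_one_of_one_lt_of_neg (by linarith) (by linarith)
    have h2 : t ^ (1-γ) + (1 + t) ^ (1-γ) - 1 < t ^ (1 - γ) := by linarith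
    have := Real.rpow_lt_rpow_of_neg (z := 1 / (1-γ)) hA h2 (by
      rw [one_div]
      exact inv_neg''.mpr (by linarith))
    rw [← hkey] at this
    exact this
  · have h1 : (1 : ℝ) < (1 + t) ^ (1 - γ) := Real.one_lt_rpow (by linarith) hβpos
    have h2 : t ^ (1 - γ) < t ^ (1-γ) + (1 + t) ^ (1-γ) - 1 := by linarith
    have := Real.rpow_lt_rpow (z := 1 / (1-γ)) (Real.rpow_nonneg ht.le _) h2 (by positivity)
    rw [← hkey] at this
    exact this

lemma thalerG_strictMonoOn {γ : ℝ} (hγ0 : 0 < γ) (hγ1 : γ ≠ 1) {a b : ℝ}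
    (ha : 0 < a) (hab : a < b) (hb1 : b ≤ 1) :
    thalerG γ a < thalerG γ b := by
  have hb : 0 < b := ha.trans hab
  have hAa := thalerA_pos hγ0 ha (hab.le.trans hb1)
  have hAb := thalerA_pos hγ0 hb hb1
  have hβ : (1 : ℝ) - γ ≠ 0 := sub_ne_zero.mpr fun h => hγ1 h.symm
  unfold thalerG
  rcases lt_or_gt_of_ne hβ with hβneg | hβpos
  · have h1 : b ^ (1 - γ) < a ^ (1 - γ) := Real.rpow_lt_rpow_of_neg ha hab hβneg
    have h2 : (1 + b) ^ (1 - γ) < (1 + a) ^ (1 - γ) :=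
      Real.rpow_lt_rpow_of_neg (by linarith) (by linarith) hβneg
    exact Real.rpow_lt_rpow_of_neg (z := 1 / (1-γ)) hAb (by linarith) (by
      rw [one_div]; exact inv_neg''.mpr hβneg)
  · have h1 : a ^ (1 - γ) < b ^ (1 - γ) := Real.rpow_lt_rpow ha.le hab hβpos
    have h2 : (1 + a) ^ (1 - γ) < (1 + b) ^ (1 - γ) :=
      Real.rpow_lt_rpow (by linarith) (by linarith) hβpos
    exact Real.rpow_lt_rpow (z := 1 / (1-γ)) hAa.le (by linarith) (by positivity)

lemma thalerG_hasDerivAt {γ : ℝ} (hγ0 : 0 < γ) (hγ1 : γ ≠ 1) {t : ℝ} (ht : 0 < t)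
    (ht1 : t ≤ 1) :
    HasDerivAt (thalerG γ)
      ((t ^ (1-γ) + (1+t) ^ (1-γ) - 1) ^ (1 / (1-γ) - 1) * (t ^ (-γ) + (1+t) ^ (-γ))) t := by
  have hA := thalerA_pos hγ0 ht ht1
  have hβ : (1 : ℝ) - γ ≠ 0 := sub_ne_zero.mpr fun h => hγ1 h.symm
  have h1 : HasDerivAt (fun s : ℝ => s ^ (1-γ)) ((1-γ) * t ^ ((1-γ) - 1)) t :=
    Real.hasDerivAt_rpow_const (Or.inl ht.ne')
  have h2 : HasDerivAt (fun s : ℝ => (1 + s) ^ (1-γ)) (1 * (1-γ) * (1+t) ^ ((1-γ)-1)) t :=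
    ((hasDerivAt_id t).const_add 1).rpow_const (Or.inl (by simp only [id_eq]; positivity))
  have h3 : HasDerivAt (fun s : ℝ => s ^ (1-γ) + (1 + s) ^ (1-γ) - 1)
      ((1-γ) * t ^ ((1-γ)-1) + 1 * (1-γ) * (1+t) ^ ((1-γ)-1)) t := (h1.add h2).sub_const 1
  have h4 := h3.rpow_const (p := 1 / (1-γ)) (Or.inl hA.ne')
  convert h4 using 1
  · rfl
  have he : (1:ℝ) - γ - 1 = -γ := by ring
  rw [he]
  field_simp

lemma slope_rpow_tendsto (c : ℝ) :
    Tendsto (fun u : ℝ => ((1 + u) ^ c - 1) / u) (𝓝[≠] (0:ℝ)) (𝓝 c) := by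
  have hd : HasDerivAt (fun u : ℝ => (1 + u) ^ c) c 0 := by
    have := ((hasDerivAt_id (0:ℝ)).const_add 1).rpow_const (p := c)
      (Or.inl (by simp only [id_eq]; norm_num))
    simpa using this
  have := hasDerivAt_iff_tendsto_slope.mp hd
  refine this.congr' ?_
  filter_upwards [self_mem_nhdsWithin] with u hu
  have hu' : u ≠ 0 := hu
  simp [slope_def_field, hu']

lemma phi_tendsto {γ : ℝ} (hγ0 : 0 < γ) (hγ1 : γ ≠ 1) :
    Tendsto (fun t : ℝ => t ^ (-γ) - thalerG γ t ^ (-γ)) (𝓝[>] (0:ℝ)) (𝓝 γ) := by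
  have hβ : (1 : ℝ) - γ ≠ 0 := sub_ne_zero.mpr fun h => hγ1 h.symm
  set β : ℝ := 1 - γ with hβdef
  set c : ℝ := -γ / β with hcdef
  set q : ℝ → ℝ := fun t => ((1 + t) ^ β - 1) / t with hqdef
  set ε : ℝ → ℝ := fun t => ((1 + t) ^ β - 1) * t ^ (-β) with hεdef
  -- q tends to β
  have hq : Tendsto q (𝓝[>] (0:ℝ)) (𝓝 β) :=
    (slope_rpow_tendsto β).mono_left (nhdsWithin_mono _ (fun t ht => ne_of_gt ht))
  -- ε tends to 0 within {0}ᶜ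
  have hε0 : Tendsto ε (𝓝[>] (0:ℝ)) (𝓝 0) := by
    have htγ : Tendsto (fun t : ℝ => t ^ γ) (𝓝[>] (0:ℝ)) (𝓝 0) := by
      have hc : ContinuousAt (fun t : ℝ => t ^ γ) 0 :=
        Real.continuousAt_rpow_const 0 γ (Or.inr hγ0.le)
      have h2 : Tendsto (fun t : ℝ => t ^ γ) (𝓝[>] (0:ℝ)) (𝓝 ((0:ℝ) ^ γ)) :=
        hc.tendsto.mono_left nhdsWithin_le_nhds
      rwa [Real.zero_rpow hγ0.ne'] at h2
    have := hq.mul htγ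
    rw [mul_zero] at this
    refine this.congr' ?_
    filter_upwards [self_mem_nhdsWithin] with t ht
    have ht' : (0:ℝ) < t := ht
    have hh : t * t ^ (-β) = t ^ γ := by
      nth_rewrite 1 [← Real.rpow_one t]
      rw [← Real.rpow_add ht']
      congr 1
      rw [hβdef]; ring
    rw [← hh]
    simp only [hqdef, hεdef]
    rw [← mul_assoc, div_mul_cancel₀ _ ht'.ne']
  have hεne : Tendsto ε (𝓝[>] (0:ℝ)) (𝓝[≠] (0:ℝ)) := by
    rw [tendsto_nhdsWithin_iff]
    refine ⟨hε0, ?_⟩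
    filter_upwards [self_mem_nhdsWithin] with t ht
    have ht' : (0:ℝ) < t := ht
    have htneg : 0 < t ^ (-β) := Real.rpow_pos_of_pos ht' _
    rcases lt_or_gt_of_ne hβ with hneg | hpos
    · have : (1 + t) ^ β < 1 := Real.rpow_lt_one_of_one_lt_of_neg (by linarith) hneg
      have : ε t < 0 := mul_neg_of_neg_of_pos (by linarith) htneg
      exact ne_of_lt this
    · have : (1:ℝ) < (1 + t) ^ β := Real.one_lt_rpow (by linarith) hpos
      have : 0 < ε t := mul_pos (by linarith) htneg
      exact ne_of_gt this
  -- ψ tends to γ/β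
  have hψ : Tendsto (fun u : ℝ => (1 - (1 + u) ^ c) / u) (𝓝[≠] (0:ℝ)) (𝓝 (γ / β)) := by
    have := (slope_rpow_tendsto c).neg
    have h2 : -c = γ / β := by rw [hcdef]; ring
    rw [h2] at this
    refine this.congr ?_
    intro u
    ring
  have hcomp := (hψ.comp hεne).mul hq
  have hlim : γ / β * β = γ := div_mul_cancel₀ γ hβ
  rw [hlim] at hcomp
  refine hcomp.congr' ?_
  filter_upwards [Ioo_mem_nhdsGT_of_mem (Set.mem_Ico.mpr ⟨le_refl _, zero_lt_one⟩)] with t ht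
  obtain ⟨ht0, ht1⟩ := ht
  have hA : 0 < t ^ β + (1 + t) ^ β - 1 := thalerA_pos hγ0 ht0 ht1.le
  have htβ : (0:ℝ) < t ^ β := Real.rpow_pos_of_pos ht0 _
  have htmβ : (0:ℝ) < t ^ (-β) := Real.rpow_pos_of_pos ht0 _
  -- key : 1 + ε t = A * t^(-β)
  have htβmul : t ^ β * t ^ (-β) = 1 := by
    rw [← Real.rpow_add ht0]; norm_num
  have hkey : 1 + ε t = (t ^ β + (1 + t) ^ β - 1) * t ^ (-β) := by
    simp only [hεdef]
    have : (t ^ β + (1 + t) ^ β - 1) * t ^ (-β)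
        = t ^ β * t ^ (-β) + ((1 + t) ^ β - 1) * t ^ (-β) := by ring
    rw [this, htβmul]
  have h1ε : 0 < 1 + ε t := by rw [hkey]; positivity
  -- g t ^ (-γ) = A ^ c
  have hgt : thalerG γ t ^ (-γ) = (t ^ β + (1 + t) ^ β - 1) ^ c := by
    unfold thalerG
    rw [← Real.rpow_mul hA.le]
    congr 1
    rw [hcdef]
    field_simp
    rw [hβdef]
  -- A = t^β * (1 + ε t)
  have hAfact : t ^ β + (1 + t) ^ β - 1 = t ^ β * (1 + ε t) := by
    rw [hkey, ← mul_assoc, mul_comm (t ^ β), mul_assoc, htβmul, mul_one]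
  -- split the rpow
  have hsplit : (t ^ β + (1 + t) ^ β - 1) ^ c = t ^ (-γ) * (1 + ε t) ^ c := by
    rw [hAfact, Real.mul_rpow htβ.le h1ε.le, ← Real.rpow_mul ht0.le]
    congr 2
    rw [hcdef]
    field_simp
  have hεt : ε t ≠ 0 := by
    simp only [hεdef]
    rcases lt_or_gt_of_ne hβ with hneg | hpos
    · have h1 : (1 + t) ^ β < 1 := Real.rpow_lt_one_of_one_lt_of_neg (by linarith) hneg
      exact ne_of_lt (mul_neg_of_neg_of_pos (by linarith) htmβ)
    · have h1 : (1:ℝ) < (1 + t) ^ β := Real.one_lt_rpow (by linarith) hpos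
      exact ne_of_gt (mul_pos (by linarith) htmβ)
  have hane : (1 + t) ^ β - 1 ≠ 0 := by
    intro h
    apply hεt
    simp only [hεdef, h, zero_mul]
  have hpow' : t ^ (-γ) * t ^ (-β) * t = 1 := by
    nth_rewrite 3 [← Real.rpow_one t]
    rw [← Real.rpow_add ht0, ← Real.rpow_add ht0]
    rw [show -γ + -β + 1 = 0 by rw [hβdef]; ring, Real.rpow_zero]
  simp only [Function.comp, hqdef]
  rw [hgt, hsplit]
  field_simp
  linear_combination (((1 + ε t) ^ c - 1) * ((1 + t) ^ β - 1)) * hpow'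

/-- Let `(x_n)_{n≥1}` be the sequence in `(0,x*]` with `x_1 = x*` and
`g(x_{n+1}) = x_n`, and for each `n ≥ 1` let `y_n` be the unique point of `(x*,1]` with
`g(y_n) = 1 + x_n`.  Then `n^α · (y_n − x*) → α^α / h(x*)` as `n → ∞`, where `α = 1/γ`
and `h(x) = x^(-γ) + (x+1)^(-γ)`. -/
theorem thaler_return_interval_asymptotics (γ : ℝ)
    (hγ : γ ∈ Set.Ioo (0 : ℝ) 1 ∪ Set.Ioi (1 : ℝ))
    (xs : ℝ) (hxs : xs ∈ Set.Ioo (0 : ℝ) 1)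
    (hxseq : xs ^ (1 - γ) + (1 + xs) ^ (1 - γ) = 2)
    (x : ℕ → ℝ)
    (hx1 : x 1 = xs)
    (hxmem : ∀ n ≥ 1, x n ∈ Set.Ioc (0 : ℝ) xs)
    (hxrec : ∀ n ≥ 1, thalerG γ (x (n + 1)) = x n)
    (y : ℕ → ℝ)
    (hymem : ∀ n ≥ 1, y n ∈ Set.Ioc xs 1)
    (hyrec : ∀ n ≥ 1, thalerG γ (y n) = 1 + x n) :
    Tendsto (fun n : ℕ => (n : ℝ) ^ (1 / γ) * (y n - xs)) atTop
      (nhds ((1 / γ) ^ (1 / γ) / (xs ^ (-γ) + (xs + 1) ^ (-γ)))) := by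
  have hγ0 : 0 < γ := by rcases hγ with h | h; exacts [h.1, lt_trans one_pos h]
  have hγ1 : γ ≠ 1 := by rcases hγ with h | h; exacts [ne_of_lt h.2, ne_of_gt h]
  obtain ⟨hxs0, hxs1⟩ := hxs
  have hxpos : ∀ n, 0 < x (n + 1) := fun n => (hxmem (n + 1) (Nat.le_add_left 1 n)).1
  have hxle : ∀ n, x (n + 1) ≤ xs := fun n => (hxmem (n + 1) (Nat.le_add_left 1 n)).2
  have hxlt1 : ∀ n, x (n + 1) ≤ 1 := fun n => (hxle n).trans hxs1.le
  have hdec : ∀ n, x (n + 2) < x (n + 1) := by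
    intro n
    have h := lt_thalerG hγ0 hγ1 (hxpos (n + 1)) (hxlt1 (n + 1))
    rwa [hxrec (n + 1) (Nat.le_add_left 1 n)] at h
  have hant : Antitone (fun n => x (n + 1)) := antitone_nat_of_succ_le fun n => (hdec n).le
  have hbdd : BddBelow (Set.range fun n => x (n + 1)) :=
    ⟨0, by rintro _ ⟨n, rfl⟩; exact (hxpos n).le⟩
  have hlim : Tendsto (fun n => x (n + 1)) atTop (𝓝 (⨅ n, x (n + 1))) :=
    tendsto_atTop_ciInf hant hbdd
  set L := ⨅ n, x (n + 1) with hLdef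
  have hL0 : 0 ≤ L := le_ciInf fun n => (hxpos n).le
  have hLxs : L ≤ xs := le_trans (ciInf_le hbdd 0) (by rw [hx1])
  have hLzero : L = 0 := by
    by_contra h
    have hLpos : 0 < L := lt_of_le_of_ne hL0 (Ne.symm h)
    have hcont : ContinuousAt (thalerG γ) L :=
      (thalerG_hasDerivAt hγ0 hγ1 hLpos (hLxs.trans hxs1.le)).continuousAt
    have h1 : Tendsto (fun n => thalerG γ (x (n + 1 + 1))) atTop (𝓝 (thalerG γ L)) :=
      hcont.tendsto.comp (hlim.comp (tendsto_add_atTop_nat 1))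
    have h2 : Tendsto (fun n => thalerG γ (x (n + 1 + 1))) atTop (𝓝 L) := by
      refine hlim.congr fun n => ?_
      exact (hxrec (n + 1) (Nat.le_add_left 1 n)).symm
    have heq := tendsto_nhds_unique h1 h2
    exact absurd heq (ne_of_gt (lt_thalerG hγ0 hγ1 hLpos (hLxs.trans hxs1.le)))
  have hx'0 : Tendsto (fun n => x (n + 1)) atTop (𝓝 0) := hLzero ▸ hlim
  have hx0all : Tendsto x atTop (𝓝 0) := (tendsto_add_atTop_iff_nat 1).mp hx'0
  -- the increments of u n = x n ^ (-γ)
  have hd : Tendsto (fun n => x (n + 2) ^ (-γ) - x (n + 1) ^ (-γ)) atTop (𝓝 γ) := by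
    have hmem2 : Tendsto (fun n => x (n + 2)) atTop (𝓝[>] (0 : ℝ)) := by
      rw [tendsto_nhdsWithin_iff]
      exact ⟨hx'0.comp (tendsto_add_atTop_nat 1),
        Eventually.of_forall fun n => hxpos (n + 1)⟩
    have h1 := (phi_tendsto hγ0 hγ1).comp hmem2
    refine h1.congr fun n => ?_
    simp only [Function.comp]
    rw [hxrec (n + 1) (Nat.le_add_left 1 n)]
  have hces := hd.cesaro
  have hsum : ∀ n, ∑ i ∈ Finset.range n, (x (i + 2) ^ (-γ) - x (i + 1) ^ (-γ))
      = x (n + 1) ^ (-γ) - x 1 ^ (-γ) :=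
    fun n => Finset.sum_range_sub (fun i => x (i + 1) ^ (-γ)) n
  have hv : Tendsto (fun n : ℕ => x (n + 1) ^ (-γ) / ((n : ℝ) + 1)) atTop (𝓝 γ) := by
    have h1 : Tendsto (fun n : ℕ => (n : ℝ)⁻¹ * (x (n + 1) ^ (-γ) - x 1 ^ (-γ))) atTop (𝓝 γ) := by
      refine hces.congr fun n => ?_
      rw [hsum n]
    have hone : Tendsto (fun n : ℕ => 1 / ((n : ℝ) + 1)) atTop (𝓝 0) :=
      tendsto_one_div_add_atTop_nhds_zero_nat
    have h2 : Tendsto (fun n : ℕ => (n : ℝ) / ((n : ℝ) + 1)) atTop (𝓝 1) := by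
      have heq : (fun n : ℕ => (n : ℝ) / ((n : ℝ) + 1)) = fun n : ℕ => 1 - 1 / ((n : ℝ) + 1) := by
        funext n
        have : ((n : ℝ) + 1) ≠ 0 := by positivity
        field_simp
        ring
      rw [heq]
      simpa using tendsto_const_nhds.sub hone
    have h3 := (h1.mul h2).add (hone.const_mul (x 1 ^ (-γ)))
    rw [mul_one, mul_zero, add_zero] at h3
    refine h3.congr' ?_
    filter_upwards [eventually_ge_atTop 1] with n hn
    have hn' : (n : ℝ) ≠ 0 := Nat.cast_ne_zero.mpr (by omega)
    have hn1 : ((n : ℝ) + 1) ≠ 0 := by positivity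
    field_simp
    try ring
  have huγ : Tendsto (fun n : ℕ => x n ^ (-γ) / (n : ℝ)) atTop (𝓝 γ) := by
    rw [← tendsto_add_atTop_iff_nat 1]
    refine hv.congr fun n => ?_
    push_cast
    try ring_nf
  have hxasym : Tendsto (fun n : ℕ => (n : ℝ) ^ (1 / γ) * x n) atTop (𝓝 (γ ^ (-(1 / γ)))) := by
    have hcont : ContinuousAt (fun s : ℝ => s ^ (-(1 / γ))) γ :=
      Real.continuousAt_rpow_const γ _ (Or.inl hγ0.ne')
    have h1 := hcont.tendsto.comp huγ
    refine h1.congr' ?_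
    filter_upwards [eventually_ge_atTop 1] with n hn
    have hn0 : (0 : ℝ) < n := by exact_mod_cast Nat.pos_of_ne_zero (by omega)
    have hxn : 0 < x n := (hxmem n hn).1
    simp only [Function.comp]
    rw [Real.div_rpow (Real.rpow_nonneg hxn.le _) hn0.le, ← Real.rpow_mul hxn.le,
      show -γ * -(1 / γ) = 1 by field_simp, Real.rpow_one, Real.rpow_neg hn0.le]
    have hne : ((n:ℝ) ^ (1 / γ)) ≠ 0 := (Real.rpow_pos_of_pos hn0 _).ne'
    field_simp
    try ring
  have hgxs : thalerG γ xs = 1 := by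
    unfold thalerG
    rw [hxseq]
    norm_num
  have hyt : Tendsto y atTop (𝓝 xs) := by
    rw [Metric.tendsto_atTop]
    intro ε hε
    set δ := min (ε / 2) ((1 - xs) / 2) with hδdef
    have hδ0 : 0 < δ := lt_min (by linarith) (by linarith)
    have hδ1 : xs + δ ≤ 1 := by
      have := min_le_right (ε / 2) ((1 - xs) / 2)
      have : δ ≤ (1 - xs) / 2 := this
      linarith
    have hgδ : 1 < thalerG γ (xs + δ) := by
      rw [← hgxs]
      exact thalerG_strictMonoOn hγ0 hγ1 hxs0 (by linarith) hδ1
    obtain ⟨N, hN⟩ := (Metric.tendsto_atTop.mp hx0all) (thalerG γ (xs + δ) - 1) (by linarith)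
    refine ⟨max N 1, fun n hn => ?_⟩
    have hn1 : 1 ≤ n := le_trans (le_max_right N 1) hn
    have hnN : N ≤ n := le_trans (le_max_left N 1) hn
    have hxn : x n < thalerG γ (xs + δ) - 1 := by
      have hdist := hN n hnN
      rw [Real.dist_eq, sub_zero] at hdist
      exact lt_of_le_of_lt (le_abs_self _) hdist
    obtain ⟨hy1, hy2⟩ := hymem n hn1
    have hylt : y n < xs + δ := by
      by_contra hcon
      push_neg at hcon
      have hle : thalerG γ (xs + δ) ≤ thalerG γ (y n) := by
        rcases eq_or_lt_of_le hcon with heq | hlt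
        · rw [heq]
        · exact (thalerG_strictMonoOn hγ0 hγ1 (by linarith) hlt hy2).le
      rw [hyrec n hn1] at hle
      linarith
    rw [Real.dist_eq, abs_of_pos (by linarith : (0 : ℝ) < y n - xs)]
    have : δ ≤ ε / 2 := min_le_left _ _
    linarith
  have hAxs : xs ^ (1 - γ) + (1 + xs) ^ (1 - γ) - 1 = 1 := by rw [hxseq]; norm_num
  have hD := thalerG_hasDerivAt hγ0 hγ1 hxs0 hxs1.le
  rw [hAxs, Real.one_rpow, one_mul] at hD
  have hslope := hasDerivAt_iff_tendsto_slope.mp hD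
  have hyne : Tendsto y atTop (𝓝[≠] xs) := by
    rw [tendsto_nhdsWithin_iff]
    refine ⟨hyt, ?_⟩
    filter_upwards [eventually_ge_atTop 1] with n hn
    exact ne_of_gt (hymem n hn).1
  have hslope2 : Tendsto (fun n => x n / (y n - xs)) atTop
      (𝓝 (xs ^ (-γ) + (1 + xs) ^ (-γ))) := by
    refine (hslope.comp hyne).congr' ?_
    filter_upwards [eventually_ge_atTop 1] with n hn
    simp only [Function.comp, slope_def_field]
    rw [hyrec n hn, hgxs]
    ring_nf
  have hDpos : 0 < xs ^ (-γ) + (1 + xs) ^ (-γ) := by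
    have := Real.rpow_pos_of_pos hxs0 (-γ)
    have := Real.rpow_pos_of_pos (show (0:ℝ) < 1 + xs by linarith) (-γ)
    linarith
  have hfin := hxasym.div hslope2 hDpos.ne'
  have hconst : (1 / γ) ^ (1 / γ) / (xs ^ (-γ) + (xs + 1) ^ (-γ))
      = γ ^ (-(1 / γ)) / (xs ^ (-γ) + (1 + xs) ^ (-γ)) := by
    rw [add_comm xs 1, one_div γ, Real.inv_rpow hγ0.le, ← Real.rpow_neg hγ0.le]
  rw [hconst]
  refine hfin.congr' ?_
  filter_upwards [eventually_ge_atTop 1] with n hn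
  have hxn := (hxmem n hn).1
  have hyn := (hymem n hn).1
  have h1 : x n ≠ 0 := ne_of_gt hxn
  have h2 : y n - xs ≠ 0 := ne_of_gt (by linarith)
  rw [Pi.div_apply]
  field_simp
end
end
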